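/- arXiv:1308.3242 — 3 statements merged into one kernel-verified Lean document; each statement's English description precedes it below -/
import Mathlib

section
/- Let n, r ∈ ℕ with r ≥ 1, let G be an n-vertex r-regular triangle-free finite simple graph, and let m = nr/2 be its number of edges. Then, as rational numbers, (k_2⊎k_2)(G) − c_4(G) ≤ m·((m − r²)/2 − (r−1)²/4). -/
open Finset

/-- `numInducedReg G k d` is the number of `k`-element vertex subsets `J` such that every vertex
of `J` has exactly `d` neighbours inside `J`, i.e. such that the induced subgraph `G[J]` is
`d`-regular.  In particular `numInducedReg G 3 2 = k₃(G)` (triangles),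
`numInducedReg G 4 3 = k₄(G)`, `numInducedReg G 4 2 = c₄(G)` (a 2-regular graph on 4 vertices is
a 4-cycle), `numInducedReg G 4 1 = (k₂⊎k₂)(G)` (a 1-regular graph on 4 vertices is a perfect
matching), and `numInducedReg G 5 2 = c₅(G)` (a 2-regular graph on 5 vertices is a 5-cycle). -/
def numInducedReg {V : Type*} (G : SimpleGraph V) [Fintype V] [DecidableEq V] [DecidableRel G.Adj]
    (k d : ℕ) : ℕ :=
  (((univ : Finset V).powersetCard k).filter
    fun J => ∀ v ∈ J, (J.filter fun u => G.Adj v u).card = d).card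

/-!
Count labelled copies `f : Fin 4 → V`: let `D` be the copies of `2K₂` (pairs of vertex-disjoint
oriented edges `f 0 f 1`, `f 2 f 3`), `P` the paths `f 0 - f 1 - f 2 - f 3`, and `A`, `C` the
induced copies of `2K₂` and `C₄`. Both patterns have 8 automorphisms, so `#A = 8 (k₂⊎k₂)(G)` and
`#C = 8 c₄(G)`. In an `r`-regular triangle-free graph with `m` edges, `#D = 2m (2m - 4r + 2)` and
`#P = 2m (r - 1)²`, and inclusion–exclusion over the edges between the two edges of a pair gives
`#A + 4 #P = #D + 2 #C`. Since `C ⊆ P`, `8 ((k₂⊎k₂)(G) - c₄(G)) = #D + #C - 4 #P ≤ #D - 3 #P`,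
which is eight times the right-hand side.
-/

open Function

lemma injective_fin_four_iff {V : Type*} {f : Fin 4 → V} : Injective f ↔
    f 0 ≠ f 1 ∧ f 0 ≠ f 2 ∧ f 0 ≠ f 3 ∧ f 1 ≠ f 2 ∧ f 1 ≠ f 3 ∧ f 2 ≠ f 3 := by
  simp only [Injective, Fin.forall_fin_succ]
  grind

namespace SimpleGraph

lemma CliqueFree.not_adj_of_adj_of_adj {V : Type*} {G : SimpleGraph V} (htf : G.CliqueFree 3)
    {a b c : V} (hab : G.Adj a b) (hbc : G.Adj b c) : ¬G.Adj a c := by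
  classical
  exact fun hac => htf {a, b, c} (is3Clique_triple_iff.mpr ⟨hab, hac, hbc⟩)

/-- Inclusion–exclusion over the four cross pairs between the edges `ab` and `cd`: two cross edges
sharing a vertex would close a triangle, so only `ac, bd` or `bc, ad` can occur together. -/
lemma CliqueFree.ite_cross_adj_eq {V : Type*} {G : SimpleGraph V} [DecidableRel G.Adj]
    (htf : G.CliqueFree 3) {a b c d : V} (hab : G.Adj a b) (hcd : G.Adj c d) :
    ((if ¬G.Adj a c ∧ ¬G.Adj a d ∧ ¬G.Adj b c ∧ ¬G.Adj b d then 1 else 0) +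
        (if G.Adj a c then 1 else 0) + (if G.Adj a d then 1 else 0) +
        (if G.Adj b c then 1 else 0) + (if G.Adj b d then 1 else 0) : ℕ) =
      1 + (if G.Adj a c ∧ G.Adj b d then 1 else 0) + (if G.Adj b c ∧ G.Adj a d then 1 else 0) := by
  have hac_ad : G.Adj a c → ¬G.Adj a d := (htf.not_adj_of_adj_of_adj · hcd)
  have hac_bc : G.Adj a c → ¬G.Adj b c := htf.not_adj_of_adj_of_adj hab.symm
  have had_bd : G.Adj a d → ¬G.Adj b d := htf.not_adj_of_adj_of_adj hab.symm
  have hbc_bd : G.Adj b c → ¬G.Adj b d := (htf.not_adj_of_adj_of_adj · hcd)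
  split_ifs <;> simp_all

def matchingGraph (n : ℕ) : SimpleGraph (Fin n) where
  Adj i j := i ≠ j ∧ i.val / 2 = j.val / 2
  symm := ⟨fun _ _ h => ⟨h.1.symm, h.2.symm⟩⟩
  loopless := ⟨fun _ h => h.1 rfl⟩

instance (n : ℕ) : DecidableRel (matchingGraph n).Adj :=
  fun i j => inferInstanceAs (Decidable (i ≠ j ∧ i.val / 2 = j.val / 2))

instance (n : ℕ) : DecidableRel (pathGraph n).Adj :=
  fun _ _ => decidable_of_iff _ pathGraph_adj.symm

section Copies

variable {V : Type*} [Fintype V] [DecidableEq V] (G : SimpleGraph V) [DecidableRel G.Adj]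
  {k : ℕ} (H : SimpleGraph (Fin k)) [DecidableRel H.Adj]

def autFinset : Finset (Equiv.Perm (Fin k)) := {σ | ∀ i j, H.Adj (σ i) (σ j) ↔ H.Adj i j}

variable {H} in
lemma symm_mem_autFinset {σ : Equiv.Perm (Fin k)} (hσ : σ ∈ autFinset H) :
    σ.symm ∈ autFinset H := by
  simp only [autFinset, mem_filter, mem_univ, true_and] at hσ ⊢
  intro i j
  simpa using (hσ (σ.symm i) (σ.symm j)).symm

def copyFinset : Finset (Fin k → V) :=
  {f | Injective f ∧ ∀ i j, H.Adj i j → G.Adj (f i) (f j)}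

def inducedCopyFinset : Finset (Fin k → V) :=
  {f | Injective f ∧ ∀ i j, G.Adj (f i) (f j) ↔ H.Adj i j}

lemma inducedCopyFinset_subset_copyFinset : G.inducedCopyFinset H ⊆ G.copyFinset H := by
  intro f hf
  simp only [inducedCopyFinset, copyFinset, mem_filter, mem_univ, true_and] at hf ⊢
  exact ⟨hf.1, fun i j h => (hf.2 i j).2 h⟩

lemma copyFinset_anti {H' : SimpleGraph (Fin k)} [DecidableRel H'.Adj] (h : H' ≤ H) :
    G.copyFinset H ⊆ G.copyFinset H' := by
  intro f hf
  simp only [copyFinset, mem_filter, mem_univ, true_and] at hf ⊢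
  exact ⟨hf.1, fun i j hij => hf.2 i j (h hij)⟩

variable {G H}

lemma comp_mem_copyFinset {σ : Equiv.Perm (Fin k)} (hσ : σ ∈ autFinset H) {f : Fin k → V}
    (hf : f ∈ G.copyFinset H) : f ∘ σ ∈ G.copyFinset H := by
  simp only [copyFinset, autFinset, mem_filter, mem_univ, true_and] at hf hσ ⊢
  exact ⟨hf.1.comp σ.injective, fun i j hij => hf.2 _ _ ((hσ i j).2 hij)⟩

lemma card_filter_copyFinset_comp {σ : Equiv.Perm (Fin k)} (hσ : σ ∈ autFinset H)
    (p : (Fin k → V) → Prop) [DecidablePred p] :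
    #{f ∈ G.copyFinset H | p (f ∘ σ)} = #{f ∈ G.copyFinset H | p f} := by
  refine card_nbij' (· ∘ σ) (· ∘ σ.symm) ?_ ?_ ?_ ?_
  · intro f hf
    simp only [coe_filter] at hf ⊢
    exact ⟨comp_mem_copyFinset hσ hf.1, hf.2⟩
  · intro f hf
    simp only [coe_filter] at hf ⊢
    refine ⟨comp_mem_copyFinset (symm_mem_autFinset hσ) hf.1, ?_⟩
    simpa [comp_assoc] using hf.2
  · intro f _
    simp [comp_assoc]
  · intro f _
    simp [comp_assoc]

/-- The induced copies of `H` with a prescribed image form an orbit of the automorphisms of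
`H`, acting freely by precomposition. -/
lemma card_filter_inducedCopyFinset_image_eq {f₀ : Fin k → V}
    (hf₀ : f₀ ∈ G.inducedCopyFinset H) :
    #{f ∈ G.inducedCopyFinset H | univ.image f = univ.image f₀} = #(autFinset H) := by
  simp only [inducedCopyFinset, mem_filter, mem_univ, true_and] at hf₀
  obtain ⟨hinj₀, hadj₀⟩ := hf₀
  symm
  refine card_bij (fun σ _ => f₀ ∘ σ) ?_ ?_ ?_
  · intro σ hσ
    simp only [autFinset, inducedCopyFinset, mem_filter, mem_univ, true_and] at hσ ⊢
    refine ⟨⟨hinj₀.comp σ.injective, fun i j => (hadj₀ _ _).trans (hσ i j)⟩, ?_⟩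
    rw [← image_image, image_univ_equiv]
  · intro σ _ τ _ h
    exact Equiv.ext fun i => hinj₀ (congrFun h i)
  · intro f hf
    simp only [inducedCopyFinset, mem_filter, mem_univ, true_and] at hf
    obtain ⟨⟨hinj, hadj⟩, himage⟩ := hf
    have hmem (i : Fin k) : ∃ j, f₀ j = f i := by
      simpa [himage] using mem_image_of_mem f (mem_univ i)
    choose τ hτ using hmem
    have hτinj : Injective τ := fun i j h => hinj (by rw [← hτ, ← hτ, h])
    let σ := Equiv.ofBijective τ (Finite.injective_iff_bijective.mp hτinj)
    refine ⟨σ, ?_, funext hτ⟩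
    simp only [autFinset, mem_filter, mem_univ, true_and]
    intro i j
    rw [← hadj₀, ← hadj]
    simp [σ, hτ]

lemma card_inducedCopyFinset :
    #(G.inducedCopyFinset H) =
      #(autFinset H) * #((G.inducedCopyFinset H).image fun f => univ.image f) := by
  rw [card_eq_sum_card_image (fun f => univ.image f), sum_const_nat, mul_comm]
  rintro J hJ
  obtain ⟨f₀, hf₀, rfl⟩ := mem_image.mp hJ
  exact card_filter_inducedCopyFinset_image_eq hf₀

lemma card_filter_adj_image_of_mem_inducedCopyFinset {f : Fin k → V}
    (hf : f ∈ G.inducedCopyFinset H) (i : Fin k) :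
    #{u ∈ univ.image f | G.Adj (f i) u} = H.degree i := by
  simp only [inducedCopyFinset, mem_filter, mem_univ, true_and] at hf
  rw [filter_image, card_image_of_injective _ hf.1, ← card_neighborFinset_eq_degree,
    neighborFinset_eq_filter]
  simp only [hf.2]

theorem card_inducedCopyFinset_eq_mul_numInducedReg {d : ℕ} (hH : H.IsRegularOfDegree d)
    (hJ : ∀ J : Finset V, #J = k → (∀ v ∈ J, #{u ∈ J | G.Adj v u} = d) →
      ∃ f ∈ G.inducedCopyFinset H, univ.image f = J) :
    #(G.inducedCopyFinset H) = #(autFinset H) * numInducedReg G k d := by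
  rw [card_inducedCopyFinset, numInducedReg]
  congr 2
  ext J
  simp only [mem_image, mem_filter, mem_powersetCard, subset_univ, true_and]
  constructor
  · rintro ⟨f, hf, rfl⟩
    refine ⟨?_, ?_⟩
    · rw [card_image_of_injective _ (mem_filter.mp hf).2.1, card_univ, Fintype.card_fin]
    · simp only [mem_image, mem_univ, true_and, forall_exists_index, forall_apply_eq_imp_iff]
      intro i
      rw [card_filter_adj_image_of_mem_inducedCopyFinset hf, hH]
  · rintro ⟨hcard, hreg⟩
    exact hJ J hcard hreg

end Copies

section FourVertices

lemma card_autFinset_matchingGraph : #(autFinset (matchingGraph 4)) = 8 := by decide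

lemma card_autFinset_cycleGraph : #(autFinset (cycleGraph 4)) = 8 := by decide

variable {V : Type*} [Fintype V] [DecidableEq V] {G : SimpleGraph V} [DecidableRel G.Adj]
  {f : Fin 4 → V}

lemma mem_copyFinset_matchingGraph :
    f ∈ G.copyFinset (matchingGraph 4) ↔ Injective f ∧ G.Adj (f 0) (f 1) ∧ G.Adj (f 2) (f 3) := by
  simp [copyFinset, Fin.forall_fin_succ, matchingGraph, G.adj_comm (f 1), G.adj_comm (f 3)]

lemma mem_copyFinset_pathGraph :
    f ∈ G.copyFinset (pathGraph 4) ↔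
      Injective f ∧ G.Adj (f 0) (f 1) ∧ G.Adj (f 1) (f 2) ∧ G.Adj (f 2) (f 3) := by
  simp [copyFinset, Fin.forall_fin_succ, pathGraph_adj, G.adj_comm (f 1) (f 0),
    G.adj_comm (f 2) (f 1), G.adj_comm (f 3) (f 2)]
  tauto

lemma mem_inducedCopyFinset_matchingGraph :
    f ∈ G.inducedCopyFinset (matchingGraph 4) ↔ f ∈ G.copyFinset (matchingGraph 4) ∧
      ¬G.Adj (f 0) (f 2) ∧ ¬G.Adj (f 0) (f 3) ∧ ¬G.Adj (f 1) (f 2) ∧ ¬G.Adj (f 1) (f 3) := by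
  rw [mem_copyFinset_matchingGraph]
  simp [inducedCopyFinset, Fin.forall_fin_succ, matchingGraph, G.adj_comm (f 1) (f 0),
    G.adj_comm (f 2) (f 0), G.adj_comm (f 3) (f 0), G.adj_comm (f 2) (f 1),
    G.adj_comm (f 3) (f 1), G.adj_comm (f 3) (f 2)]
  tauto

lemma mem_inducedCopyFinset_cycleGraph :
    f ∈ G.inducedCopyFinset (cycleGraph 4) ↔ Injective f ∧ G.Adj (f 0) (f 1) ∧
      G.Adj (f 1) (f 2) ∧ G.Adj (f 2) (f 3) ∧ G.Adj (f 3) (f 0) ∧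
      ¬G.Adj (f 0) (f 2) ∧ ¬G.Adj (f 1) (f 3) := by
  simp +decide [inducedCopyFinset, Fin.forall_fin_succ, cycleGraph_adj,
    G.adj_comm (f 1) (f 0), G.adj_comm (f 2) (f 0), G.adj_comm (f 3) (f 0),
    G.adj_comm (f 2) (f 1), G.adj_comm (f 3) (f 1), G.adj_comm (f 3) (f 2)]
  tauto

end FourVertices

section FourSets

variable {V : Type*} [DecidableEq V] (G : SimpleGraph V) [DecidableRel G.Adj]

lemma image_univ_vec_four (a b c d : V) : univ.image ![a, b, c, d] = {a, b, c, d} := by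
  ext
  simp [Fin.exists_fin_succ, eq_comm]

lemma card_filter_adj_insert_four {a b c d : V} (hab : a ≠ b) (hac : a ≠ c) (had : a ≠ d)
    (hbc : b ≠ c) (hbd : b ≠ d) (hcd : c ≠ d) (v : V) :
    #{u ∈ ({a, b, c, d} : Finset V) | G.Adj v u} =
      (if G.Adj v a then 1 else 0) + (if G.Adj v b then 1 else 0) +
        (if G.Adj v c then 1 else 0) + (if G.Adj v d then 1 else 0) := by
  rw [card_filter, sum_insert (by simp [hab, hac, had]), sum_insert (by simp [hbc, hbd]),
    sum_insert (by simp [hcd]), sum_singleton]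
  ring

variable [Fintype V]

lemma exists_mem_inducedCopyFinset_matchingGraph {J : Finset V} (hJ : #J = 4)
    (hreg : ∀ v ∈ J, #{u ∈ J | G.Adj v u} = 1) :
    ∃ f ∈ G.inducedCopyFinset (matchingGraph 4), univ.image f = J := by
  obtain ⟨a, b, c, d, hab, hac, had, hbc, hbd, hcd, rfl⟩ := card_eq_four.mp hJ
  simp only [forall_mem_insert, forall_eq, mem_singleton,
    card_filter_adj_insert_four G hab hac had hbc hbd hcd] at hreg
  have key : (G.Adj a b ∧ G.Adj c d ∧ ¬G.Adj a c ∧ ¬G.Adj a d ∧ ¬G.Adj b c ∧ ¬G.Adj b d) ∨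
      (G.Adj a c ∧ G.Adj b d ∧ ¬G.Adj a b ∧ ¬G.Adj a d ∧ ¬G.Adj c b ∧ ¬G.Adj c d) ∨
      (G.Adj a d ∧ G.Adj b c ∧ ¬G.Adj a b ∧ ¬G.Adj a c ∧ ¬G.Adj d b ∧ ¬G.Adj d c) := by
    simp only [G.adj_comm b a, G.adj_comm c a, G.adj_comm c b, G.adj_comm d a, G.adj_comm d b,
      G.adj_comm d c, SimpleGraph.irrefl] at hreg ⊢
    by_cases h1 : G.Adj a b <;> by_cases h2 : G.Adj a c <;> by_cases h3 : G.Adj a d <;>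
      by_cases h4 : G.Adj b c <;> by_cases h5 : G.Adj b d <;> by_cases h6 : G.Adj c d <;>
      simp_all
  rcases key with h | h | h
  · refine ⟨![a, b, c, d], ?_, image_univ_vec_four a b c d⟩
    simp [mem_inducedCopyFinset_matchingGraph, mem_copyFinset_matchingGraph,
      injective_fin_four_iff, *]
  · refine ⟨![a, c, b, d], ?_, by rw [image_univ_vec_four, insert_comm c b]⟩
    simp [mem_inducedCopyFinset_matchingGraph, mem_copyFinset_matchingGraph,
      injective_fin_four_iff, hbc.symm, *]
  · refine ⟨![a, d, b, c], ?_, by rw [image_univ_vec_four, insert_comm d b, pair_comm d c]⟩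
    simp [mem_inducedCopyFinset_matchingGraph, mem_copyFinset_matchingGraph,
      injective_fin_four_iff, hbd.symm, hcd.symm, *]

lemma exists_mem_inducedCopyFinset_cycleGraph {J : Finset V} (hJ : #J = 4)
    (hreg : ∀ v ∈ J, #{u ∈ J | G.Adj v u} = 2) :
    ∃ f ∈ G.inducedCopyFinset (cycleGraph 4), univ.image f = J := by
  obtain ⟨a, b, c, d, hab, hac, had, hbc, hbd, hcd, rfl⟩ := card_eq_four.mp hJ
  simp only [forall_mem_insert, forall_eq, mem_singleton,
    card_filter_adj_insert_four G hab hac had hbc hbd hcd] at hreg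
  have key : (G.Adj a b ∧ G.Adj b c ∧ G.Adj c d ∧ G.Adj d a ∧ ¬G.Adj a c ∧ ¬G.Adj b d) ∨
      (G.Adj a c ∧ G.Adj c b ∧ G.Adj b d ∧ G.Adj d a ∧ ¬G.Adj a b ∧ ¬G.Adj c d) ∨
      (G.Adj a b ∧ G.Adj b d ∧ G.Adj d c ∧ G.Adj c a ∧ ¬G.Adj a d ∧ ¬G.Adj b c) := by
    simp only [G.adj_comm b a, G.adj_comm c a, G.adj_comm c b, G.adj_comm d a, G.adj_comm d b,
      G.adj_comm d c, SimpleGraph.irrefl] at hreg ⊢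
    by_cases h1 : G.Adj a b <;> by_cases h2 : G.Adj a c <;> by_cases h3 : G.Adj a d <;>
      by_cases h4 : G.Adj b c <;> by_cases h5 : G.Adj b d <;> by_cases h6 : G.Adj c d <;>
      simp_all
  rcases key with h | h | h
  · refine ⟨![a, b, c, d], ?_, image_univ_vec_four a b c d⟩
    simp [mem_inducedCopyFinset_cycleGraph, injective_fin_four_iff, *]
  · refine ⟨![a, c, b, d], ?_, by rw [image_univ_vec_four, insert_comm c b]⟩
    simp [mem_inducedCopyFinset_cycleGraph, injective_fin_four_iff, hbc.symm, *]
  · refine ⟨![a, b, d, c], ?_, by rw [image_univ_vec_four, pair_comm d c]⟩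
    simp [mem_inducedCopyFinset_cycleGraph, injective_fin_four_iff, hcd.symm, *]

theorem card_inducedCopyFinset_matchingGraph :
    #(G.inducedCopyFinset (matchingGraph 4)) = 8 * numInducedReg G 4 1 := by
  have hreg : (matchingGraph 4).IsRegularOfDegree 1 := fun v => by fin_cases v <;> decide
  rw [card_inducedCopyFinset_eq_mul_numInducedReg hreg
    (fun _ => G.exists_mem_inducedCopyFinset_matchingGraph), card_autFinset_matchingGraph]

theorem card_inducedCopyFinset_cycleGraph :
    #(G.inducedCopyFinset (cycleGraph 4)) = 8 * numInducedReg G 4 2 := by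
  rw [card_inducedCopyFinset_eq_mul_numInducedReg (fun _ => cycleGraph_degree_three_le)
    (fun _ => G.exists_mem_inducedCopyFinset_cycleGraph), card_autFinset_cycleGraph]

end FourSets

section Darts

variable {V : Type*} [Fintype V] (G : SimpleGraph V) [DecidableRel G.Adj]

def dartFinset : Finset (V × V) := {p | G.Adj p.1 p.2}

@[simp] lemma mem_dartFinset {p : V × V} : p ∈ G.dartFinset ↔ G.Adj p.1 p.2 := by
  simp [dartFinset]

lemma card_dartFinset : #G.dartFinset = 2 * #G.edgeFinset := by
  rw [← dart_card_eq_twice_card_edges, ← card_univ,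
    ← card_map ⟨Dart.toProd, Dart.toProd_injective⟩]
  congr 1
  ext p
  simp only [mem_dartFinset, mem_map, mem_univ, true_and, Embedding.coeFn_mk]
  exact ⟨fun h => ⟨⟨p, h⟩, rfl⟩, fun ⟨d, hd⟩ => hd ▸ d.adj⟩

variable [DecidableEq V]

lemma card_filter_fst_eq_dartFinset (v : V) : #{p ∈ G.dartFinset | p.1 = v} = G.degree v := by
  rw [← card_neighborFinset_eq_degree]
  refine card_nbij' Prod.snd (fun u => (v, u)) ?_ ?_ ?_ ?_
  · rintro ⟨x, y⟩ hp
    simp only [mem_coe, mem_filter, mem_dartFinset] at hp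
    obtain ⟨hxy, rfl⟩ := hp
    simpa using hxy
  · intro u hu
    simpa using hu
  · rintro ⟨x, y⟩ hp
    simp only [mem_coe, mem_filter] at hp
    rw [← hp.2]
  · intro u _
    rfl

lemma card_filter_fst_mem_dartFinset (s : Finset V) :
    #{p ∈ G.dartFinset | p.1 ∈ s} = ∑ v ∈ s, G.degree v := by
  rw [card_eq_sum_card_fiberwise (f := Prod.fst) (s := {p ∈ G.dartFinset | p.1 ∈ s}) (t := s)
    fun p hp => (mem_filter.mp hp).2]
  refine sum_congr rfl fun v hv => ?_
  rw [filter_filter, ← card_filter_fst_eq_dartFinset]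
  congr 1
  exact filter_congr fun p _ => and_iff_right_of_imp fun h => h ▸ hv

lemma card_filter_snd_mem_dartFinset (s : Finset V) :
    #{p ∈ G.dartFinset | p.2 ∈ s} = ∑ v ∈ s, G.degree v := by
  rw [← card_filter_fst_mem_dartFinset]
  refine card_nbij' Prod.swap Prod.swap ?_ ?_ ?_ ?_ <;> intro p hp
  · simpa [G.adj_comm p.2] using hp
  · simpa [G.adj_comm p.2] using hp
  · rfl
  · rfl

/-- A dart meets the edge `ab` of an `r`-regular graph in `4r - 2` ways: it starts at `a` or `b`
(`2r` darts), ends at `a` or `b` (`2r` darts), or does both (`ab` and `ba`). -/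
lemma card_filter_dartFinset_not_mem_pair {r : ℕ} (hreg : G.IsRegularOfDegree r) {a b : V}
    (hab : G.Adj a b) :
    #{p ∈ G.dartFinset | p.1 ∉ ({a, b} : Finset V) ∧ p.2 ∉ ({a, b} : Finset V)} + 4 * r =
      #G.dartFinset + 2 := by
  set s : Finset V := {a, b}
  have hdeg : ∑ v ∈ s, G.degree v = 2 * r := by
    rw [sum_pair hab.ne, hreg a, hreg b]
    ring
  have hboth : #{p ∈ G.dartFinset | p.1 ∈ s ∧ p.2 ∈ s} = 2 := by
    rw [card_eq_two]
    refine ⟨(a, b), (b, a), by simp [hab.ne], ?_⟩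
    ext ⟨x, y⟩
    simp only [s, mem_filter, mem_dartFinset, mem_insert, mem_singleton, Prod.mk.injEq]
    constructor
    · rintro ⟨hxy, rfl | rfl, rfl | rfl⟩ <;> simp_all
    · rintro (⟨rfl, rfl⟩ | ⟨rfl, rfl⟩) <;> simp [hab, hab.symm]
  have hmeet := card_union_add_card_inter {p ∈ G.dartFinset | p.1 ∈ s}
    {p ∈ G.dartFinset | p.2 ∈ s}
  rw [← filter_or, ← filter_and, hboth, card_filter_fst_mem_dartFinset,
    card_filter_snd_mem_dartFinset, hdeg] at hmeet
  have hsplit := card_filter_add_card_filter_not (s := G.dartFinset)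
    (fun p : V × V => p.1 ∈ s ∨ p.2 ∈ s)
  simp only [not_or] at hsplit
  omega

end Darts

section Counting

variable {V : Type*} [Fintype V] [DecidableEq V] (G : SimpleGraph V) [DecidableRel G.Adj]

theorem card_copyFinset_matchingGraph {r : ℕ} (hreg : G.IsRegularOfDegree r) :
    #(G.copyFinset (matchingGraph 4)) + #G.dartFinset * (4 * r) =
      #G.dartFinset * (#G.dartFinset + 2) := by
  have hmaps : Set.MapsTo (fun f : Fin 4 → V => (f 0, f 1)) (G.copyFinset (matchingGraph 4))
      G.dartFinset := fun f hf => by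
    simpa using (mem_copyFinset_matchingGraph.mp hf).2.1
  have hfiber : ∀ p ∈ G.dartFinset,
      #{f ∈ G.copyFinset (matchingGraph 4) | (f 0, f 1) = p} + 4 * r = #G.dartFinset + 2 := by
    rintro ⟨a, b⟩ hab
    replace hab : G.Adj a b := (mem_dartFinset G).mp hab
    rw [← card_filter_dartFinset_not_mem_pair G hreg hab]
    congr 1
    refine card_nbij' (fun f => (f 2, f 3)) (fun q => ![a, b, q.1, q.2]) ?_ ?_ ?_ ?_
    · intro f hf
      simp only [mem_coe, mem_filter, mem_copyFinset_matchingGraph, injective_fin_four_iff,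
        Prod.mk.injEq] at hf
      obtain ⟨⟨⟨-, h02, h03, h12, h13, -⟩, -, h23⟩, rfl, rfl⟩ := hf
      simp [h23, h02.symm, h03.symm, h12.symm, h13.symm]
    · rintro ⟨c, d⟩ hq
      simp only [mem_coe, mem_filter, mem_dartFinset, mem_insert, mem_singleton, not_or] at hq
      obtain ⟨hcd, ⟨hca, hcb⟩, hda, hdb⟩ := hq
      simp [mem_copyFinset_matchingGraph, injective_fin_four_iff, hab,
        hcd, hcd.ne, hab.ne, Ne.symm hca, Ne.symm hcb, Ne.symm hda, Ne.symm hdb]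
    · intro f hf
      simp only [mem_coe, mem_filter, Prod.mk.injEq] at hf
      obtain ⟨-, rfl, rfl⟩ := hf
      funext i
      fin_cases i <;> rfl
    · intro q _
      rfl
  have htotal := sum_congr rfl hfiber
  rwa [sum_add_distrib, ← card_eq_sum_card_fiberwise hmaps, sum_const, sum_const, smul_eq_mul,
    smul_eq_mul] at htotal

theorem card_copyFinset_pathGraph {r : ℕ} (htf : G.CliqueFree 3) (hreg : G.IsRegularOfDegree r) :
    #(G.copyFinset (pathGraph 4)) = #G.dartFinset * (r - 1) ^ 2 := by
  have hmaps : Set.MapsTo (fun f : Fin 4 → V => (f 1, f 2)) (G.copyFinset (pathGraph 4))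
      G.dartFinset := fun f hf => by
    simpa using (mem_copyFinset_pathGraph.mp hf).2.2.1
  rw [card_eq_sum_card_fiberwise hmaps, sum_const_nat]
  rintro ⟨b, c⟩ hbc
  replace hbc : G.Adj b c := (mem_dartFinset G).mp hbc
  have hcard : #((G.neighborFinset b).erase c ×ˢ (G.neighborFinset c).erase b) = (r - 1) ^ 2 := by
    rw [card_product, card_erase_of_mem (by simpa using hbc),
      card_erase_of_mem (by simpa using hbc.symm), card_neighborFinset_eq_degree,
      card_neighborFinset_eq_degree, hreg b, hreg c, sq]
  rw [← hcard]
  refine card_nbij' (fun f => (f 0, f 3)) (fun q => ![q.1, b, c, q.2]) ?_ ?_ ?_ ?_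
  · intro f hf
    simp only [mem_coe, mem_filter, mem_copyFinset_pathGraph, injective_fin_four_iff,
      Prod.mk.injEq] at hf
    obtain ⟨⟨⟨-, h02, -, -, h13, -⟩, h01, -, h23⟩, rfl, rfl⟩ := hf
    simp [h02, h13.symm, h01.symm, h23]
  · rintro ⟨a, d⟩ hq
    simp only [mem_coe, mem_product, mem_erase, mem_neighborFinset] at hq
    obtain ⟨⟨hac, hba⟩, hdb, hcd⟩ := hq
    have had : a ≠ d := by
      rintro rfl
      exact htf.not_adj_of_adj_of_adj hba.symm hbc hcd.symm
    simp [mem_copyFinset_pathGraph, injective_fin_four_iff, hba.symm, hbc, hcd, hba.ne.symm,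
      hac, had, hbc.ne, hdb.symm, hcd.ne]
  · intro f hf
    simp only [mem_coe, mem_filter, Prod.mk.injEq] at hf
    obtain ⟨-, rfl, rfl⟩ := hf
    funext i
    fin_cases i <;> rfl
  · intro q _
    rfl

/-- A single cross edge `12` turns the pair of edges `01, 23` into the path `0-1-2-3`, and the
other cross edges are brought to this position by automorphisms of the matching. -/
theorem card_inducedCopyFinset_matchingGraph_add_card_copyFinset_pathGraph
    (htf : G.CliqueFree 3) :
    #(G.inducedCopyFinset (matchingGraph 4)) + 4 * #(G.copyFinset (pathGraph 4)) =
      #(G.copyFinset (matchingGraph 4)) + 2 * #(G.inducedCopyFinset (cycleGraph 4)) := by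
  have hswap01 : Equiv.swap 0 1 ∈ autFinset (matchingGraph 4) := by decide
  have hswap23 : Equiv.swap 2 3 ∈ autFinset (matchingGraph 4) := by decide
  have h02 := card_filter_copyFinset_comp (G := G) hswap01 fun f : Fin 4 → V => G.Adj (f 1) (f 2)
  have h13 := card_filter_copyFinset_comp (G := G) hswap23 fun f : Fin 4 → V => G.Adj (f 1) (f 2)
  have h03 := card_filter_copyFinset_comp (G := G) hswap01 fun f : Fin 4 → V => G.Adj (f 1) (f 3)
  have h0213 := card_filter_copyFinset_comp (G := G) hswap01
    fun f : Fin 4 → V => G.Adj (f 1) (f 2) ∧ G.Adj (f 0) (f 3)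
  simp only [comp_apply, Equiv.swap_apply_left, Equiv.swap_apply_right, Equiv.swap_apply_def,
    Fin.reduceEq, if_false] at h02 h13 h03 h0213
  set D := G.copyFinset (matchingGraph 4)
  have hpoint (f : Fin 4 → V) (hf : f ∈ D) := by
    obtain ⟨-, h01, h23⟩ := mem_copyFinset_matchingGraph.mp hf
    exact htf.ite_cross_adj_eq h01 h23
  have hsum := sum_congr rfl hpoint
  simp only [sum_add_distrib, ← card_filter, sum_const, smul_eq_mul, mul_one] at hsum
  have hA : #{f ∈ D | ¬G.Adj (f 0) (f 2) ∧ ¬G.Adj (f 0) (f 3) ∧ ¬G.Adj (f 1) (f 2) ∧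
      ¬G.Adj (f 1) (f 3)} = #(G.inducedCopyFinset (matchingGraph 4)) := by
    congr 1
    ext f
    rw [mem_filter, mem_inducedCopyFinset_matchingGraph]
  have hW : #{f ∈ D | G.Adj (f 1) (f 2)} = #(G.copyFinset (pathGraph 4)) := by
    congr 1
    ext f
    rw [mem_filter, mem_copyFinset_matchingGraph, mem_copyFinset_pathGraph]
    tauto
  have hC : #{f ∈ D | G.Adj (f 1) (f 2) ∧ G.Adj (f 0) (f 3)} =
      #(G.inducedCopyFinset (cycleGraph 4)) := by
    congr 1
    ext f
    rw [mem_filter, mem_copyFinset_matchingGraph, mem_inducedCopyFinset_cycleGraph]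
    constructor
    · rintro ⟨⟨hinj, h01, h23⟩, h12, h03⟩
      exact ⟨hinj, h01, h12, h23, h03.symm, htf.not_adj_of_adj_of_adj h01 h12,
        htf.not_adj_of_adj_of_adj h12 h23⟩
    · rintro ⟨hinj, h01, h12, h23, h30, -, -⟩
      exact ⟨⟨hinj, h01, h23⟩, h12, h30.symm⟩
  omega

theorem card_inducedCopyFinset_cycleGraph_le_card_copyFinset_pathGraph :
    #(G.inducedCopyFinset (cycleGraph 4)) ≤ #(G.copyFinset (pathGraph 4)) :=
  card_le_card <| (G.inducedCopyFinset_subset_copyFinset _).trans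
    (G.copyFinset_anti _ pathGraph_le_cycleGraph)

end Counting

end SimpleGraph

theorem stmt_16_general {V : Type*} [Fintype V] [DecidableEq V] (G : SimpleGraph V) [DecidableRel G.Adj]
    (r m : ℕ) (hr : 1 ≤ r) (hreg : G.IsRegularOfDegree r)
    (htf : G.CliqueFree 3) (hm : G.edgeFinset.card = m) :
    (numInducedReg G 4 1 : ℚ) - (numInducedReg G 4 2 : ℚ) ≤
      (m : ℚ) * (((m : ℚ) - (r : ℚ) ^ 2) / 2 - ((r : ℚ) - 1) ^ 2 / 4) := by
  have hsplit := G.card_inducedCopyFinset_matchingGraph_add_card_copyFinset_pathGraph htf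
  rw [G.card_inducedCopyFinset_matchingGraph, G.card_inducedCopyFinset_cycleGraph] at hsplit
  have hD := G.card_copyFinset_matchingGraph hreg
  have hP := G.card_copyFinset_pathGraph htf hreg
  rw [G.card_dartFinset, hm] at hD hP
  have hCP := G.card_inducedCopyFinset_cycleGraph_le_card_copyFinset_pathGraph
  rw [G.card_inducedCopyFinset_cycleGraph] at hCP
  qify [hr] at hsplit hD hP hCP
  linarith

/-- Let `n, r ∈ ℕ` with `r ≥ 1`, let `G` be an `n`-vertex `r`-regular triangle-free
finite simple graph, and let `m = nr/2` be its number of edges.  Then, as rational numbers,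
`(k₂⊎k₂)(G) − c_4(G) ≤ m·((m − r²)/2 − (r−1)²/4)`. -/
theorem stmt_16 {V : Type*} [Fintype V] [DecidableEq V] (G : SimpleGraph V) [DecidableRel G.Adj]
    (n r m : ℕ) (hr : 1 ≤ r) (hn : Fintype.card V = n) (hreg : G.IsRegularOfDegree r)
    (htf : G.CliqueFree 3) (hm : G.edgeFinset.card = m) :
    (numInducedReg G 4 1 : ℚ) - (numInducedReg G 4 2 : ℚ) ≤
      (m : ℚ) * (((m : ℚ) - (r : ℚ) ^ 2) / 2 - ((r : ℚ) - 1) ^ 2 / 4) :=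
  stmt_16_general G r m hr hreg htf hm
end

section
/- Let G be a finite r-regular simple graph with girth 5 and diameter 2, with n vertices and m edges. Then i_4(G) = C(n,4) − C(n−2,2)·m + n(n−4)·C(r,2) − n·C(r,3) + C(m,2) − m·(r−1)², the identity being understood in the integers. -/
/-!
Girth 5 forbids triangles and 4-cycles, and diameter 2 gives every non-adjacent pair a common
neighbour, so `G` is strongly regular with parameters `(n, r, 0, 1)`; in particular `n = r² + 1`.
Counting pairs (independent `t`-set `s`, vertex outside `s ∪ N(s)`) in two ways gives
`(t + 1) i_{t+1} = ∑_s (n - t - |N(s)|)`. For `|s| ≤ 2` strong regularity fixes `|N(s)|`; for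
`|s| = 3` inclusion–exclusion leaves the number of common neighbours of `s`, and these sum to
`n·C(r,3)` because every neighbourhood is independent. The resulting polynomial for `24 i_4`
becomes the stated formula after substituting `n = r² + 1` and `n r = 2 m`.
-/

open Finset

/-- `numIndep G t` is the number of independent sets of size `t` in `G`, i.e. the number of
`t`-element subsets of the vertex set containing no edge. -/
def numIndep {V : Type*} (G : SimpleGraph V) [Fintype V] [DecidableEq V] [DecidableRel G.Adj]
    (t : ℕ) : ℕ :=
  (((univ : Finset V).powersetCard t).filter fun s => ∀ u ∈ s, ∀ v ∈ s, ¬ G.Adj u v).card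

theorem Finset.cast_card_union_union {α : Type*} [DecidableEq α] (A B C : Finset α) :
    (#(A ∪ B ∪ C) : ℤ) =
      #A + #B + #C - #(A ∩ B) - #(A ∩ C) - #(B ∩ C) + #(A ∩ B ∩ C) := by
  have hAB := card_union_add_card_inter A B
  have hAB_C := card_union_add_card_inter (A ∪ B) C
  have hAC_BC := card_union_add_card_inter (A ∩ C) (B ∩ C)
  rw [union_inter_distrib_right] at hAB_C
  rw [← inter_inter_distrib_right] at hAC_BC
  omega

theorem Nat.factorial_mul_cast_choose (k j : ℕ) :
    (j.factorial * k.choose j : ℤ) = ∏ i ∈ range j, ((k : ℤ) - i) := by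
  rw [← descPochhammer_eval_eq_prod_range, descPochhammer_eval_eq_descFactorial,
    Nat.descFactorial_eq_factorial_mul_choose, Nat.cast_mul]

namespace SimpleGraph

variable {V : Type*} {G : SimpleGraph V}

theorem commonNeighbors_eq_empty_of_adj (hg : 4 ≤ G.egirth) {v w : V} (h : G.Adj v w) :
    G.commonNeighbors v w = ∅ := by
  refine Set.eq_empty_of_forall_notMem fun x hx => ?_
  rw [mem_commonNeighbors] at hx
  have hcycle : (Walk.cons h (Walk.cons hx.2 (Walk.cons hx.1.symm .nil))).IsCycle := by
    have := hx.1.ne; have := hx.2.ne; have := h.ne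
    simp_all [Walk.isCycle_def, Walk.isTrail_def, List.nodup_cons]
    aesop
  have := hg.trans (egirth_le_length hcycle)
  norm_num at this

theorem commonNeighbors_subsingleton (hg : 5 ≤ G.egirth) {v w : V} (hne : v ≠ w) :
    (G.commonNeighbors v w).Subsingleton := by
  intro x hx y hy
  by_contra hxy
  rw [mem_commonNeighbors] at hx hy
  have hcycle :
      (Walk.cons hx.1 <| .cons hx.2.symm <| .cons hy.2 <| .cons hy.1.symm .nil).IsCycle := by
    have := hx.1.ne; have := hx.2.ne; have := hy.1.ne; have := hy.2.ne
    simp_all [Walk.isCycle_def, Walk.isTrail_def, List.nodup_cons]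
    aesop
  have := hg.trans (egirth_le_length hcycle)
  norm_num at this

theorem commonNeighbors_nonempty (hd : G.ediam ≤ 2) {v w : V} (hne : v ≠ w)
    (ha : ¬ G.Adj v w) :
    (G.commonNeighbors v w).Nonempty := by
  by_contra h
  have := two_lt_edist_iff.mpr ⟨hne, ha, Set.not_nonempty_iff_eq_empty.mp h⟩
  exact lt_irrefl _ (this.trans_le (edist_le_ediam.trans hd))

theorem IsRegularOfDegree.isSRGWith_of_five_le_egirth_of_ediam_le_two [Fintype V]
    [DecidableRel G.Adj] {k : ℕ} (hreg : G.IsRegularOfDegree k) (hg : 5 ≤ G.egirth)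
    (hd : G.ediam ≤ 2) :
    G.IsSRGWith (Fintype.card V) k 0 1 where
  card := rfl
  regular := hreg
  of_adj v w h := by
    rw [Fintype.card_eq_zero_iff, Set.isEmpty_coe_sort]
    exact commonNeighbors_eq_empty_of_adj (le_trans (by norm_num) hg) h
  of_not_adj v w hne ha := by
    obtain ⟨x, hx⟩ := commonNeighbors_nonempty hd hne ha
    rw [Fintype.card_eq_one_iff]
    exact ⟨⟨x, hx⟩, fun y => Subtype.ext (commonNeighbors_subsingleton hg hne y.2 hx)⟩

theorem IsSRGWith.card_eq_sq_add_one [Fintype V] [DecidableRel G.Adj] [Nonempty V] {n k : ℕ}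
    (h : G.IsSRGWith n k 0 1) : n = k ^ 2 + 1 := by
  obtain ⟨v⟩ := ‹Nonempty V›
  have hkn : k < n := h.card ▸ h.regular.degree_eq v ▸ G.degree_lt_card_verts v
  have := h.param_eq G (by omega)
  rcases k with _ | k
  · omega
  · simp only [Nat.sub_zero, Nat.add_sub_cancel, mul_one] at this
    have hn : n = n - (k + 1) - 1 + (k + 1) + 1 := by omega
    rw [hn, ← this]
    ring

theorem IsRegularOfDegree.card_mul_eq_two_mul_card_edgeFinset [Fintype V] [DecidableRel G.Adj]
    {k : ℕ} (h : G.IsRegularOfDegree k) : Fintype.card V * k = 2 * #G.edgeFinset := by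
  rw [← sum_degrees_eq_twice_card_edges, sum_congr rfl fun v _ => h.degree_eq v, sum_const,
    Finset.card_univ, smul_eq_mul]

variable [DecidableEq V] {s T : Finset V} {t : ℕ} {v : V}

theorem IsNIndepSet.erase_of_mem (hT : G.IsNIndepSet (t + 1) T) (hv : v ∈ T) :
    G.IsNIndepSet t (T.erase v) := by
  simpa using ((isNClique_compl _).mpr hT).erase_of_mem hv

variable [Fintype V] [DecidableRel G.Adj]

theorem numIndep_eq_card_indepSetFinset (t : ℕ) : numIndep G t = #(G.indepSetFinset t) := by
  unfold numIndep indepSetFinset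
  congr 1
  ext s
  simp only [mem_filter, mem_powersetCard, subset_univ, true_and, mem_univ, isNIndepSet_iff,
    IsIndepSet, Set.Pairwise, mem_coe]
  constructor
  · rintro ⟨hcard, hs⟩
    exact ⟨fun u hu w hw _ => hs u hu w hw, hcard⟩
  · rintro ⟨hs, hcard⟩
    refine ⟨hcard, fun u hu w hw huw => ?_⟩
    exact hs hu hw (G.ne_of_adj huw) huw

theorem IsNIndepSet.insert (hs : G.IsNIndepSet t s)
    (hv : v ∉ s ∪ s.biUnion (G.neighborFinset ·)) :
    G.IsNIndepSet (t + 1) (insert v s) := by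
  simp only [mem_union, mem_biUnion, mem_neighborFinset, not_or, not_exists, not_and] at hv
  refine (isNClique_compl _).mp (((isNClique_compl _).mpr hs).insert fun u hu => ?_)
  exact ⟨fun h => hv.1 (h ▸ hu), fun h => hv.2 u hu h.symm⟩

theorem succ_mul_card_indepSetFinset_succ (t : ℕ) :
    (t + 1) * #(G.indepSetFinset (t + 1)) =
      ∑ s ∈ G.indepSetFinset t, #(s ∪ s.biUnion (G.neighborFinset ·))ᶜ := by
  rw [mul_comm, ← sum_const_nat fun T hT => (mem_indepSetFinset_iff.mp hT).card_eq,
    ← card_sigma, ← card_sigma]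
  refine card_bij' (fun p _ => ⟨p.1.erase p.2, p.2⟩) (fun p _ => ⟨insert p.2 p.1, p.2⟩)
    ?_ ?_ ?_ ?_
  · rintro ⟨T, v⟩ hp
    simp only [mem_sigma, mem_indepSetFinset_iff] at hp ⊢
    refine ⟨hp.1.erase_of_mem hp.2, ?_⟩
    simp only [mem_compl, mem_union, mem_biUnion, mem_neighborFinset, not_or, not_exists,
      not_and]
    exact ⟨notMem_erase v T, fun u hu huv =>
      hp.1.isIndepSet (mem_of_mem_erase hu) hp.2 (ne_of_mem_erase hu) huv⟩
  · rintro ⟨s, v⟩ hp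
    simp only [mem_sigma, mem_indepSetFinset_iff, mem_compl] at hp ⊢
    exact ⟨hp.1.insert hp.2, mem_insert_self v s⟩
  · rintro ⟨T, v⟩ hp
    simp only [mem_sigma] at hp
    simp [insert_erase hp.2]
  · rintro ⟨s, v⟩ hp
    simp only [mem_sigma, mem_compl, mem_union, not_or] at hp
    simp [erase_insert hp.2.1]

theorem IsIndepSet.card_compl_closedNeighborhood (hs : G.IsIndepSet s) :
    (#(s ∪ s.biUnion (G.neighborFinset ·))ᶜ : ℤ) =
      Fintype.card V - #s - #(s.biUnion (G.neighborFinset ·)) := by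
  have hdisj : Disjoint s (s.biUnion (G.neighborFinset ·)) := by
    rw [Finset.disjoint_left]
    simp only [mem_biUnion, mem_neighborFinset, not_exists, not_and]
    exact fun v hv u hu huv => hs hu hv (G.ne_of_adj huv) huv
  have := card_compl_add_card (s ∪ s.biUnion (G.neighborFinset ·))
  rw [card_union_of_disjoint hdisj] at this
  omega

theorem succ_mul_card_indepSetFinset_succ_eq_sum (t : ℕ) :
    ((t + 1) * #(G.indepSetFinset (t + 1)) : ℤ) =
      ∑ s ∈ G.indepSetFinset t,
        ((Fintype.card V : ℤ) - t - #(s.biUnion (G.neighborFinset ·))) := by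
  rw [← Nat.cast_succ, ← Nat.cast_mul, succ_mul_card_indepSetFinset_succ, Nat.cast_sum]
  refine sum_congr rfl fun s hs => ?_
  obtain ⟨hind, hcard⟩ := mem_indepSetFinset_iff.mp hs
  rw [hind.card_compl_closedNeighborhood, hcard]

theorem card_indepSetFinset_one : #(G.indepSetFinset 1) = Fintype.card V := by
  have : G.indepSetFinset 1 = univ.powersetCard 1 := by
    ext s
    simp only [mem_indepSetFinset_iff, isNIndepSet_iff, mem_powersetCard_univ,
      and_iff_right_iff_imp]
    intro hs
    obtain ⟨a, rfl⟩ := card_eq_one.mp hs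
    simp [IsIndepSet]
  rw [this, card_powersetCard, Finset.card_univ, Nat.choose_one_right]

theorem sum_card_commonNeighbors_indepSetFinset (hG : G.CliqueFree 3) (t : ℕ) :
    ∑ s ∈ G.indepSetFinset t, #{w | ∀ u ∈ s, G.Adj u w} = ∑ w, (G.degree w).choose t := by
  have := sum_card_bipartiteAbove_eq_sum_card_bipartiteBelow (s := G.indepSetFinset t)
    (t := univ) (r := fun s w => ∀ u ∈ s, G.Adj u w)
  simp only [bipartiteAbove, bipartiteBelow] at this
  rw [this]
  refine sum_congr rfl fun w _ => ?_
  rw [← card_neighborFinset_eq_degree, ← card_powersetCard]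
  congr 1
  ext s
  simp only [mem_filter, mem_indepSetFinset_iff, isNIndepSet_iff, mem_powersetCard,
    subset_iff, mem_neighborFinset]
  constructor
  · rintro ⟨⟨-, hcard⟩, hadj⟩
    exact ⟨fun u hu => (hadj u hu).symm, hcard⟩
  · rintro ⟨hadj, hcard⟩
    refine ⟨⟨Set.Pairwise.mono (fun u hu => hadj hu)
      (isIndepSet_neighborSet_of_triangleFree G hG w), hcard⟩, fun u hu => (hadj hu).symm⟩

namespace IsSRGWith

variable {n k ℓ μ : ℕ}

theorem card_neighborFinset_inter_of_not_adj (h : G.IsSRGWith n k ℓ μ) {v w : V} (hne : v ≠ w)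
    (ha : ¬ G.Adj v w) : #(G.neighborFinset v ∩ G.neighborFinset w) = μ := by
  rw [← h.of_not_adj hne ha]
  exact (Fintype.card_of_subtype _ fun x => by simp [mem_commonNeighbors]).symm

theorem cliqueFree_three (h : G.IsSRGWith n k 0 μ) : G.CliqueFree 3 := by
  intro s hs
  obtain ⟨a, b, c, hab, hac, hbc, rfl⟩ := is3Clique_iff.mp hs
  have := h.of_adj a b hab
  rw [Fintype.card_eq_zero_iff] at this
  exact this.false ⟨c, hac, hbc⟩

theorem card_biUnion_neighborFinset_of_isNIndepSet_two (h : G.IsSRGWith n k ℓ μ)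
    (hs : G.IsNIndepSet 2 s) : (#(s.biUnion (G.neighborFinset ·)) : ℤ) = 2 * k - μ := by
  obtain ⟨a, b, hab, rfl⟩ := card_eq_two.mp hs.card_eq
  have hAB := h.card_neighborFinset_inter_of_not_adj hab
    (hs.isIndepSet (by simp) (by simp) hab)
  have := card_union_add_card_inter (G.neighborFinset a) (G.neighborFinset b)
  simp only [card_neighborFinset_eq_degree, h.regular.degree_eq, hAB] at this
  rw [biUnion_insert, singleton_biUnion]
  omega

theorem card_biUnion_neighborFinset_of_isNIndepSet_three (h : G.IsSRGWith n k ℓ μ)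
    (hs : G.IsNIndepSet 3 s) :
    (#(s.biUnion (G.neighborFinset ·)) : ℤ) =
      3 * k - 3 * μ + #{w | ∀ u ∈ s, G.Adj u w} := by
  obtain ⟨a, b, c, hab, hac, hbc, rfl⟩ := card_eq_three.mp hs.card_eq
  have hind := hs.isIndepSet
  have hunion : ({a, b, c} : Finset V).biUnion (G.neighborFinset ·) =
      G.neighborFinset a ∪ G.neighborFinset b ∪ G.neighborFinset c := by
    simp [biUnion_insert, union_assoc]
  have hcommon : ({w | ∀ u ∈ ({a, b, c} : Finset V), G.Adj u w} : Finset V) =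
      G.neighborFinset a ∩ G.neighborFinset b ∩ G.neighborFinset c := by
    ext
    simp
  rw [hunion, hcommon, cast_card_union_union,
    h.card_neighborFinset_inter_of_not_adj hab (hind (by simp) (by simp) hab),
    h.card_neighborFinset_inter_of_not_adj hac (hind (by simp) (by simp) hac),
    h.card_neighborFinset_inter_of_not_adj hbc (hind (by simp) (by simp) hbc)]
  simp only [card_neighborFinset_eq_degree, h.regular.degree_eq]
  ring

theorem two_mul_card_indepSetFinset_two (h : G.IsSRGWith n k ℓ μ) :
    (2 * #(G.indepSetFinset 2) : ℤ) = n * (n - 1 - k) := by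
  have hN : ∀ s ∈ G.indepSetFinset 1, (#(s.biUnion (G.neighborFinset ·)) : ℤ) = k := by
    intro s hs
    obtain ⟨a, rfl⟩ := card_eq_one.mp (mem_indepSetFinset_iff.mp hs).card_eq
    simp [h.regular.degree_eq]
  have := G.succ_mul_card_indepSetFinset_succ_eq_sum 1
  rw [sum_congr rfl fun s hs => by rw [hN s hs], sum_const, card_indepSetFinset_one,
    h.card] at this
  simpa using this

theorem three_mul_card_indepSetFinset_three (h : G.IsSRGWith n k ℓ μ) :
    (3 * #(G.indepSetFinset 3) : ℤ) = #(G.indepSetFinset 2) * (n - 2 - (2 * k - μ)) := by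
  have := G.succ_mul_card_indepSetFinset_succ_eq_sum 2
  rw [sum_congr rfl fun s hs => by
    rw [h.card_biUnion_neighborFinset_of_isNIndepSet_two (mem_indepSetFinset_iff.mp hs)],
    sum_const, h.card] at this
  simpa using this

theorem four_mul_card_indepSetFinset_four (h : G.IsSRGWith n k 0 μ) :
    (4 * #(G.indepSetFinset 4) : ℤ) =
      #(G.indepSetFinset 3) * (n - 3 - (3 * k - 3 * μ)) - n * k.choose 3 := by
  have hsum := sum_card_commonNeighbors_indepSetFinset h.cliqueFree_three 3
  simp only [h.regular.degree_eq, sum_const, Finset.card_univ, h.card, smul_eq_mul] at hsum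
  have := G.succ_mul_card_indepSetFinset_succ_eq_sum 3
  rw [sum_congr rfl fun s hs => by
    rw [h.card_biUnion_neighborFinset_of_isNIndepSet_three (mem_indepSetFinset_iff.mp hs)],
    h.card] at this
  simp only [sum_sub_distrib, sum_add_distrib, sum_const, nsmul_eq_mul] at this
  rw [← Nat.cast_sum, hsum] at this
  push_cast at this
  linear_combination this

theorem card_indepSetFinset_four (h : G.IsSRGWith n k 0 μ) :
    (24 * #(G.indepSetFinset 4) : ℤ) =
      n * (n - 1 - k) * (n - 2 - 2 * k + μ) * (n - 3 - 3 * k + 3 * μ)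
        - n * (k * (k - 1) * (k - 2)) := by
  have hk : (6 * k.choose 3 : ℤ) = k * (k - 1) * (k - 2) := by
    simpa [prod_range_succ, Nat.factorial] using Nat.factorial_mul_cast_choose k 3
  linear_combination 6 * h.four_mul_card_indepSetFinset_four
    + 2 * (n - 3 - 3 * k + 3 * μ : ℤ) * h.three_mul_card_indepSetFinset_three
    + (n - 2 - 2 * k + μ : ℤ) * (n - 3 - 3 * k + 3 * μ : ℤ)
      * h.two_mul_card_indepSetFinset_two
    - n * hk

end IsSRGWith

end SimpleGraph

/-- Let `G` be a finite `r`-regular simple graph with girth 5 and diameter 2, with `n`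
vertices and `m` edges.  Then
`i_4(G) = C(n,4) − C(n−2,2)·m + n(n−4)·C(r,2) − n·C(r,3) + C(m,2) − m·(r−1)²`,
as an identity of integers. -/
theorem stmt_18 {V : Type*} [Fintype V] [DecidableEq V] (G : SimpleGraph V) [DecidableRel G.Adj]
    (n r m : ℕ) (hreg : G.IsRegularOfDegree r) (hgirth : G.girth = 5) (hdiam : G.diam = 2)
    (hn : Fintype.card V = n) (hm : G.edgeFinset.card = m) :
    (numIndep G 4 : ℤ) =
      (n.choose 4 : ℤ) - ((n - 2).choose 2 : ℤ) * m
        + (n : ℤ) * ((n : ℤ) - 4) * (r.choose 2 : ℤ) - (n : ℤ) * (r.choose 3 : ℤ)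
        + (m.choose 2 : ℤ) - (m : ℤ) * ((r : ℤ) - 1) ^ 2 := by
  have hg : G.egirth = 5 := (ENat.toNat_eq_iff (by norm_num)).mp hgirth
  have hd : G.ediam = 2 := (ENat.toNat_eq_iff (by norm_num)).mp hdiam
  have hsrg := hreg.isSRGWith_of_five_le_egirth_of_ediam_le_two hg.ge hd.le
  rw [hn] at hsrg
  have : Nontrivial V := SimpleGraph.nontrivial_of_diam_ne_zero (G := G) (by omega)
  have hn2 : 2 ≤ n := hn ▸ Fintype.one_lt_card
  have hmoore : (n : ℤ) = r ^ 2 + 1 := by exact_mod_cast hsrg.card_eq_sq_add_one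
  have hedges : (n * r : ℤ) = 2 * m := by
    exact_mod_cast hn ▸ hm ▸ hreg.card_mul_eq_two_mul_card_edgeFinset
  have h24 := hsrg.card_indepSetFinset_four
  have hc4n : (24 * n.choose 4 : ℤ) = n * (n - 1) * (n - 2) * (n - 3) := by
    simpa [prod_range_succ, Nat.factorial] using Nat.factorial_mul_cast_choose n 4
  have hcn2 : (2 * (n - 2).choose 2 : ℤ) = (n - 2) * (n - 3) := by
    simpa [prod_range_succ, Nat.factorial, hn2, sub_sub]
      using Nat.factorial_mul_cast_choose (n - 2) 2
  have hc2r : (2 * r.choose 2 : ℤ) = r * (r - 1) := by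
    simpa [prod_range_succ, Nat.factorial] using Nat.factorial_mul_cast_choose r 2
  have hc3r : (6 * r.choose 3 : ℤ) = r * (r - 1) * (r - 2) := by
    simpa [prod_range_succ, Nat.factorial] using Nat.factorial_mul_cast_choose r 3
  have hc2m : (2 * m.choose 2 : ℤ) = m * (m - 1) := by
    simpa [prod_range_succ, Nat.factorial] using Nat.factorial_mul_cast_choose m 2
  rw [SimpleGraph.numIndep_eq_card_indepSetFinset]
  apply mul_left_cancel₀ (show (24 : ℤ) ≠ 0 by norm_num)
  linear_combination h24 - hc4n + 12 * (m : ℤ) * hcn2 - 12 * (n : ℤ) * ((n : ℤ) - 4) * hc2r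
    + 4 * (n : ℤ) * hc3r - 12 * hc2m
    + (4 * (n : ℤ) ^ 2 - 9 * (n : ℤ) * r - 6 * (n : ℤ)) * hmoore
    + (6 * (m : ℤ) - 6 * (n : ℤ) ^ 2 + 3 * (n : ℤ) * r + 30 * (n : ℤ) - 12 * (r : ℤ) ^ 2
      + 24 * (r : ℤ) - 54) * hedges
end

section
/- If G is a finite 57-regular simple graph with girth 5 and diameter 2, then G has exactly 2⁶·3·5²·7²·13·19 = 58,094,400 pentagons (5-element vertex subsets inducing a 5-cycle), exactly 2³·3·5⁴·7·11·13·19² = 5,420,415,000 independent sets of size three, and exactly 2²·5⁴·7·11·13·19·87751 independent sets of size four. -/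
open Finset

section MooreAux

open SimpleGraph
set_option linter.unusedSectionVars false
set_option maxHeartbeats 1000000

variable {V : Type*} [Fintype V] [DecidableEq V] {G : SimpleGraph V} [DecidableRel G.Adj]

lemma egirth5 (hg : G.girth = 5) : G.egirth = 5 := by
  have h : G.egirth ≠ ⊤ := by
    intro h; rw [SimpleGraph.girth, h] at hg; simp at hg
  rw [SimpleGraph.girth] at hg
  exact (ENat.toNat_eq_iff (by norm_num)).mp hg ▸ rfl

lemma noTri (hg : G.girth = 5) {a b c : V} (hab : G.Adj a b) (hbc : G.Adj b c) :
    ¬ G.Adj a c := by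
  intro hac
  have hcyc : (Walk.cons hab (Walk.cons hbc (Walk.cons hac.symm Walk.nil))).IsCycle := by
    simp [Walk.isCycle_def, Walk.isTrail_def, hab.ne, hbc.ne, hac.ne, hab.ne', hbc.ne', hac.ne']
  have h5 := SimpleGraph.le_egirth.mp (le_of_eq (egirth5 hg).symm) a _ hcyc
  simp at h5
  norm_num at h5

lemma uniqCommon (hg : G.girth = 5) {a b x y : V} (hab : a ≠ b)
    (hax : G.Adj a x) (hbx : G.Adj b x) (hay : G.Adj a y) (hby : G.Adj b y) : x = y := by
  by_contra hxy
  have hnadj : ¬ G.Adj a b := fun h => noTri hg hax hbx.symm h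
  -- cycle a - x - b - y - a
  have hcyc : (Walk.cons hax (Walk.cons hbx.symm (Walk.cons hby (Walk.cons hay.symm
      Walk.nil)))).IsCycle := by
    simp [Walk.isCycle_def, Walk.isTrail_def, hax.ne, hbx.ne, hay.ne, hby.ne, hab, hxy,
      hax.ne', hbx.ne', hay.ne', hby.ne', Ne.symm hab, Ne.symm hxy]
  have h5 := SimpleGraph.le_egirth.mp (le_of_eq (egirth5 hg).symm) a _ hcyc
  simp at h5
  norm_num at h5

lemma exCommon (hd : G.diam = 2) {a b : V} (hab : a ≠ b) (hnadj : ¬ G.Adj a b) :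
    ∃ x, G.Adj a x ∧ G.Adj b x := by
  have hne : G.ediam ≠ ⊤ := ediam_ne_top_of_diam_ne_zero (by omega)
  have hdist : G.dist a b ≤ 2 := hd ▸ dist_le_diam hne
  have hr : G.Reachable a b := reachable_of_edist_ne_top
    (fun ht => hne (top_le_iff.mp (ht ▸ edist_le_ediam)))
  have hdne : G.dist a b ≠ 0 := dist_ne_zero_iff_ne_and_reachable.mpr ⟨hab, hr⟩
  have hd1 : G.dist a b ≠ 1 := fun h => hnadj (dist_eq_one_iff_adj.mp h)
  have hd2 : G.dist a b = 2 := by omega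
  obtain ⟨w, hw⟩ := hr.exists_walk_length_eq_dist
  rw [hd2] at hw
  cases w with
  | nil => simp at hw
  | cons h p =>
    cases p with
    | nil => simp at hw
    | cons h' p' =>
      cases p' with
      | nil => exact ⟨_, h, h'.symm⟩
      | cons h'' p'' => simp [Walk.length_cons] at hw

lemma degN (hreg : G.IsRegularOfDegree 57) (v : V) : (G.neighborFinset v).card = 57 := by
  rw [G.card_neighborFinset_eq_degree]; exact hreg v

lemma interOne (hg : G.girth = 5) (hd : G.diam = 2) {a b : V} (hab : a ≠ b)
    (hnadj : ¬ G.Adj a b) :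
    (G.neighborFinset a ∩ G.neighborFinset b).card = 1 := by
  obtain ⟨x, hx1, hx2⟩ := exCommon hd hab hnadj
  rw [Finset.card_eq_one]
  refine ⟨x, ?_⟩
  ext y
  simp only [mem_inter, mem_neighborFinset, mem_singleton]
  constructor
  · rintro ⟨h1, h2⟩; exact uniqCommon hg hab h1 h2 hx1 hx2
  · rintro rfl; exact ⟨hx1, hx2⟩

lemma cardV (hreg : G.IsRegularOfDegree 57) (hg : G.girth = 5) (hd : G.diam = 2) :
    Fintype.card V = 3250 := by
  have : Nontrivial V := nontrivial_of_diam_ne_zero (by rw [hd]; norm_num)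
  obtain ⟨v⟩ := (inferInstance : Nonempty V)
  classical
  set D : Finset V := univ.filter (fun x => x ≠ v ∧ ¬ G.Adj v x) with hD
  have hDcard : D.card = 3192 := by
    have hb := Finset.card_bij (s := (G.neighborFinset v).sigma
        (fun w => (G.neighborFinset w).erase v)) (t := D)
      (fun p _ => p.2)
      (by
        rintro ⟨w, x⟩ hp
        simp only [Finset.mem_sigma, mem_neighborFinset, Finset.mem_erase] at hp
        simp only [hD, Finset.mem_filter, Finset.mem_univ, true_and]
        exact ⟨hp.2.1, noTri hg hp.1 hp.2.2⟩)
      (by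
        rintro ⟨w, x⟩ hp ⟨w', x'⟩ hp' h
        simp only [Finset.mem_sigma, mem_neighborFinset, Finset.mem_erase] at hp hp'
        dsimp at h
        subst h
        have : w = w' := uniqCommon hg (a := v) (b := x)
          (Ne.symm hp.2.1) hp.1 hp.2.2.symm hp'.1 hp'.2.2.symm
        subst this; rfl)
      (by
        intro x hx
        simp only [hD, Finset.mem_filter, Finset.mem_univ, true_and] at hx
        obtain ⟨w, hw1, hw2⟩ := exCommon hd (Ne.symm hx.1) (fun h => hx.2 h)
        exact ⟨⟨w, x⟩, by
          simp only [Finset.mem_sigma, mem_neighborFinset, Finset.mem_erase]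
          exact ⟨hw1, hx.1, hw2.symm⟩, rfl⟩)
    rw [← hb, Finset.card_sigma]
    have : ∀ w ∈ G.neighborFinset v, ((G.neighborFinset w).erase v).card = 56 := by
      intro w hw
      rw [Finset.card_erase_of_mem (by rwa [mem_neighborFinset, ← G.adj_comm,
        ← mem_neighborFinset]), degN hreg]
    rw [Finset.sum_congr rfl this, Finset.sum_const, degN hreg]; norm_num
  have hsplit : (univ : Finset V) = insert v (G.neighborFinset v ∪ D) := by
    ext x
    simp only [hD, Finset.mem_insert, Finset.mem_union, mem_neighborFinset, Finset.mem_filter,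
      Finset.mem_univ, true_and]
    constructor
    · intro _
      by_cases h1 : x = v
      · exact Or.inl h1
      · by_cases h2 : G.Adj v x
        · exact Or.inr (Or.inl h2)
        · exact Or.inr (Or.inr ⟨h1, h2⟩)
    · intro _; trivial
  have hv1 : v ∉ G.neighborFinset v ∪ D := by
    simp [hD, mem_neighborFinset]
  have hv2 : Disjoint (G.neighborFinset v) D := by
    rw [Finset.disjoint_left]
    intro x hx hx'
    simp only [hD, Finset.mem_filter, mem_neighborFinset] at hx hx'
    exact hx'.2.2 hx
  rw [← Finset.card_univ, hsplit, Finset.card_insert_of_notMem hv1,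
    Finset.card_union_of_disjoint hv2, degN hreg, hDcard]

def Ind (G : SimpleGraph V) [DecidableRel G.Adj] (k : ℕ) : Finset (Finset V) :=
  (((univ : Finset V).powersetCard k).filter fun s => ∀ u ∈ s, ∀ v ∈ s, ¬ G.Adj u v)

def extFS (G : SimpleGraph V) [DecidableRel G.Adj] (s : Finset V) : Finset V :=
  univ.filter fun u => u ∉ s ∧ ∀ v ∈ s, ¬ G.Adj u v

def tcount (G : SimpleGraph V) [DecidableRel G.Adj] (s : Finset V) : ℕ :=
  (univ.filter fun x => ∀ v ∈ s, G.Adj x v).card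

variable {G : SimpleGraph V} [DecidableRel G.Adj]

lemma mem_Ind {k : ℕ} {s : Finset V} :
    s ∈ Ind G k ↔ s.card = k ∧ ∀ u ∈ s, ∀ v ∈ s, ¬ G.Adj u v := by
  simp [Ind, Finset.mem_powersetCard_univ]

lemma extFS_eq (s : Finset V) :
    extFS G s = (s ∪ s.biUnion fun v => G.neighborFinset v)ᶜ := by
  ext u
  simp only [extFS, Finset.mem_filter, Finset.mem_univ, true_and, Finset.mem_compl,
    Finset.mem_union, Finset.mem_biUnion, mem_neighborFinset, not_or, not_exists]
  constructor
  · rintro ⟨h1, h2⟩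
    refine ⟨h1, fun v hv => (h2 v hv.1 hv.2.symm).elim⟩
  · rintro ⟨h1, h2⟩
    exact ⟨h1, fun v hv hadj => h2 v ⟨hv, hadj.symm⟩⟩

lemma extFS_card (s : Finset V) :
    (extFS G s).card = Fintype.card V - (s ∪ s.biUnion fun v => G.neighborFinset v).card := by
  rw [extFS_eq, Finset.card_compl]

lemma Ind0 : Ind G 0 = ({∅} : Finset (Finset V)) := by
  ext s
  simp only [mem_Ind, Finset.card_eq_zero, Finset.mem_singleton]
  constructor
  · rintro ⟨rfl, _⟩; rfl
  · rintro rfl; simp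

lemma ext0_card (hreg : G.IsRegularOfDegree 57) (hg : G.girth = 5) (hd : G.diam = 2) :
    (extFS G (∅ : Finset V)).card = 3250 := by
  rw [extFS_card]
  simp [cardV hreg hg hd]

lemma ext1_card (hreg : G.IsRegularOfDegree 57) (hg : G.girth = 5) (hd : G.diam = 2)
    {s : Finset V} (hs : s ∈ Ind G 1) : (extFS G s).card = 3192 := by
  rw [mem_Ind] at hs
  obtain ⟨a, rfl⟩ := Finset.card_eq_one.mp hs.1
  rw [extFS_card, cardV hreg hg hd]
  have hU : ({a} : Finset V) ∪ ({a} : Finset V).biUnion (fun v => G.neighborFinset v)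
      = insert a (G.neighborFinset a) := by
    rw [Finset.singleton_biUnion]; ext x; simp
  rw [hU, Finset.card_insert_of_notMem (by simp), degN hreg]

lemma ext2_card (hreg : G.IsRegularOfDegree 57) (hg : G.girth = 5) (hd : G.diam = 2)
    {s : Finset V} (hs : s ∈ Ind G 2) : (extFS G s).card = 3135 := by
  rw [mem_Ind] at hs
  obtain ⟨a, b, hab, rfl⟩ := Finset.card_eq_two.mp hs.1
  have hnadj : ¬ G.Adj a b := hs.2 a (by simp) b (by simp)
  rw [extFS_card, cardV hreg hg hd]
  have hU : ({a, b} : Finset V).biUnion (fun v => G.neighborFinset v)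
      = G.neighborFinset a ∪ G.neighborFinset b := by
    simp [Finset.biUnion_insert, Finset.singleton_biUnion]
  rw [hU]
  have hNN : (G.neighborFinset a ∪ G.neighborFinset b).card = 113 := by
    have h1 := Finset.card_union_add_card_inter (G.neighborFinset a) (G.neighborFinset b)
    rw [degN hreg, degN hreg, interOne hg hd hab hnadj] at h1
    omega
  have hdisj : Disjoint ({a, b} : Finset V)
      (G.neighborFinset a ∪ G.neighborFinset b) := by
    rw [Finset.disjoint_left]
    intro x hx hx'
    simp only [Finset.mem_insert, Finset.mem_singleton] at hx
    simp only [Finset.mem_union, mem_neighborFinset] at hx'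
    rcases hx with rfl | rfl
    · rcases hx' with h | h
      · exact G.irrefl h
      · exact hnadj h.symm
    · rcases hx' with h | h
      · exact hnadj h
      · exact G.irrefl h
  rw [Finset.card_union_of_disjoint hdisj, hNN, Finset.card_insert_of_notMem (by simp [hab]),
    Finset.card_singleton]

lemma stepInd (k : ℕ) :
    (k + 1) * (Ind G (k + 1)).card = ∑ s ∈ Ind G k, (extFS G s).card := by
  classical
  have h1 : ((Ind G (k+1)).sigma fun q => q).card = (k + 1) * (Ind G (k+1)).card := by
    rw [Finset.card_sigma]
    rw [Finset.sum_congr rfl (fun q hq => (mem_Ind.mp hq).1), Finset.sum_const, smul_eq_mul,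
      mul_comm]
  have h2 : ((Ind G (k+1)).sigma fun q => q).card
      = ((Ind G k).sigma fun s => extFS G s).card := by
    apply Finset.card_bij (fun p _ => (⟨p.1.erase p.2, p.2⟩ : (_ : Finset V) × V))
    · rintro ⟨q, u⟩ hp
      simp only [Finset.mem_sigma] at hp ⊢
      obtain ⟨hq, hu⟩ := hp
      rw [mem_Ind] at hq
      constructor
      · rw [mem_Ind]
        refine ⟨by rw [Finset.card_erase_of_mem hu, hq.1]; rfl, ?_⟩
        intro x hx y hy
        exact hq.2 x (Finset.mem_of_mem_erase hx) y (Finset.mem_of_mem_erase hy)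
      · simp only [extFS, Finset.mem_filter, Finset.mem_univ, true_and]
        exact ⟨Finset.notMem_erase _ _, fun v hv => hq.2 u hu v (Finset.mem_of_mem_erase hv)⟩
    · rintro ⟨q, u⟩ hp ⟨q', u'⟩ hp' h
      simp only [Finset.mem_sigma] at hp hp'
      have hu : u = u' := congrArg Sigma.snd h
      subst hu
      have h1 : q.erase u = q'.erase u := congrArg Sigma.fst h
      have : q = q' := by
        rw [← Finset.insert_erase hp.2, ← Finset.insert_erase hp'.2, h1]
      subst this; rfl
    · rintro ⟨s, u⟩ hp
      simp only [Finset.mem_sigma, extFS, Finset.mem_filter, Finset.mem_univ, true_and] at hp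
      obtain ⟨hs, hu, hcomp⟩ := hp
      rw [mem_Ind] at hs
      refine ⟨⟨insert u s, u⟩, ?_, ?_⟩
      · simp only [Finset.mem_sigma]
        refine ⟨mem_Ind.mpr ⟨by rw [Finset.card_insert_of_notMem hu, hs.1], ?_⟩,
          Finset.mem_insert_self u s⟩
        intro x hx y hy
        rcases Finset.mem_insert.mp hx with hx' | hx'
        · subst hx'
          rcases Finset.mem_insert.mp hy with hy' | hy'
          · subst hy'; exact G.irrefl
          · exact hcomp y hy'
        · rcases Finset.mem_insert.mp hy with hy' | hy'
          · subst hy'; exact fun h => hcomp x hx' h.symm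
          · exact hs.2 x hx' y hy'
      · simp only [Finset.erase_insert hu]
  rw [← h1, h2, Finset.card_sigma]

lemma tcount_le_one (hg : G.girth = 5) {s : Finset V} (hs : s ∈ Ind G 2 ∨ s ∈ Ind G 3) :
    tcount G s ≤ 1 := by
  rw [tcount]
  apply Finset.card_le_one.mpr
  intro x hx y hy
  simp only [Finset.mem_filter, Finset.mem_univ, true_and] at hx hy
  obtain ⟨a, b, hab, hmem⟩ : ∃ a b, a ≠ b ∧ a ∈ s ∧ b ∈ s := by
    rcases hs with hs | hs
    · obtain ⟨a, b, hab, rfl⟩ := Finset.card_eq_two.mp (mem_Ind.mp hs).1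
      exact ⟨a, b, hab, by simp, by simp⟩
    · obtain ⟨a, b, c, hab, _, _, rfl⟩ := Finset.card_eq_three.mp (mem_Ind.mp hs).1
      exact ⟨a, b, hab, by simp, by simp⟩
  exact uniqCommon hg hab (hx a hmem.1).symm (hx b hmem.2).symm
    (hy a hmem.1).symm (hy b hmem.2).symm

lemma ext3_card (hreg : G.IsRegularOfDegree 57) (hg : G.girth = 5) (hd : G.diam = 2)
    {s : Finset V} (hs : s ∈ Ind G 3) : (extFS G s).card = 3079 - tcount G s := by
  have hind := (mem_Ind.mp hs).2
  obtain ⟨a, b, c, hab, hac, hbc, hseq⟩ := Finset.card_eq_three.mp (mem_Ind.mp hs).1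
  have ha : a ∈ s := by rw [hseq]; simp
  have hb : b ∈ s := by rw [hseq]; simp
  have hc : c ∈ s := by rw [hseq]; simp
  have nab : ¬ G.Adj a b := hind a ha b hb
  have nac : ¬ G.Adj a c := hind a ha c hc
  have nbc : ¬ G.Adj b c := hind b hb c hc
  set A := G.neighborFinset a
  set B := G.neighborFinset b
  set C := G.neighborFinset c
  have hUU : s.biUnion (fun v => G.neighborFinset v) = A ∪ B ∪ C := by
    rw [hseq]
    rw [Finset.biUnion_insert, Finset.biUnion_insert, Finset.singleton_biUnion,
      Finset.union_assoc]
  have hABC : (A ∩ C) ∩ (B ∩ C) = A ∩ B ∩ C := by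
    ext x; simp only [Finset.mem_inter]; tauto
  have htc : (A ∩ B ∩ C).card = tcount G s := by
    congr 1
    ext x
    simp only [A, B, C, Finset.mem_inter, mem_neighborFinset, tcount, Finset.mem_filter, Finset.mem_univ,
      true_and, hseq, Finset.mem_insert, Finset.mem_singleton]
    constructor
    · rintro ⟨⟨h1, h2⟩, h3⟩ v hv
      rcases hv with rfl | rfl | rfl
      · exact h1.symm
      · exact h2.symm
      · exact h3.symm
    · intro h
      exact ⟨⟨(h a (by tauto)).symm, (h b (by tauto)).symm⟩, (h c (by tauto)).symm⟩
  have e1 := Finset.card_union_add_card_inter A B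
  have e2 := Finset.card_union_add_card_inter (A ∩ C) (B ∩ C)
  have e3 := Finset.card_union_add_card_inter (A ∪ B) C
  rw [hABC, htc] at e2
  have hdist : (A ∪ B) ∩ C = (A ∩ C) ∪ (B ∩ C) := Finset.union_inter_distrib_right A B C
  rw [hdist] at e3
  rw [interOne hg hd hab nab] at e1
  rw [interOne hg hd hac nac, interOne hg hd hbc nbc] at e2
  rw [degN hreg, degN hreg] at e1
  rw [degN hreg] at e3
  -- disjointness of s and union
  have hdisj : Disjoint s (A ∪ B ∪ C) := by
    rw [Finset.disjoint_left]
    intro x hx hx'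
    simp only [Finset.mem_union, mem_neighborFinset, A, B, C] at hx'
    rw [hseq] at hx
    simp only [Finset.mem_insert, Finset.mem_singleton] at hx
    rcases hx with rfl | rfl | rfl
    · rcases hx' with (h | h) | h
      · exact G.irrefl h
      · exact nab h.symm
      · exact nac h.symm
    · rcases hx' with (h | h) | h
      · exact nab h
      · exact G.irrefl h
      · exact nbc h.symm
    · rcases hx' with (h | h) | h
      · exact nac h
      · exact nbc h
      · exact G.irrefl h
  rw [extFS_card, cardV hreg hg hd, hUU, Finset.card_union_of_disjoint hdisj]
  have hscard : s.card = 3 := (mem_Ind.mp hs).1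
  have ht1 : tcount G s ≤ 1 := tcount_le_one hg (Or.inr hs)
  omega

lemma sum_tcount (hreg : G.IsRegularOfDegree 57) (hg : G.girth = 5) (hd : G.diam = 2) :
    ∑ s ∈ Ind G 3, tcount G s = 95095000 := by
  have hb : ((univ : Finset V).sigma fun x => (G.neighborFinset x).powersetCard 3).card
      = ((Ind G 3).sigma fun s => univ.filter fun x => ∀ v ∈ s, G.Adj x v).card := by
    apply Finset.card_bij (fun p _ => (⟨p.2, p.1⟩ : (_ : Finset V) × V))
    · rintro ⟨x, s⟩ hp
      simp only [Finset.mem_sigma, Finset.mem_univ, true_and, Finset.mem_powersetCard] at hp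
      obtain ⟨hsub, hcard⟩ := hp
      have hadj : ∀ v ∈ s, G.Adj x v := by
        intro v hv
        exact (mem_neighborFinset _ _ _).mp (hsub hv)
      simp only [Finset.mem_sigma, Finset.mem_filter, Finset.mem_univ, true_and]
      refine ⟨mem_Ind.mpr ⟨hcard, ?_⟩, hadj⟩
      intro u hu v hv
      exact noTri hg (hadj u hu).symm (hadj v hv)
    · rintro ⟨x, s⟩ hp ⟨x', s'⟩ hp' h
      have h1 : s = s' := congrArg Sigma.fst h
      have h2 : x = x' := congrArg Sigma.snd h
      subst h1; subst h2; rfl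
    · rintro ⟨s, x⟩ hp
      simp only [Finset.mem_sigma, Finset.mem_filter, Finset.mem_univ, true_and] at hp
      refine ⟨⟨x, s⟩, ?_, rfl⟩
      simp only [Finset.mem_sigma, Finset.mem_univ, true_and, Finset.mem_powersetCard]
      refine ⟨fun v hv => (mem_neighborFinset _ _ _).mpr (hp.2 v hv), (mem_Ind.mp hp.1).1⟩
  have hl : ((univ : Finset V).sigma fun x => (G.neighborFinset x).powersetCard 3).card
      = 95095000 := by
    rw [Finset.card_sigma]
    have : ∀ x ∈ (univ : Finset V), ((G.neighborFinset x).powersetCard 3).card = 29260 := by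
      intro x _
      rw [Finset.card_powersetCard, degN hreg]; rfl
    rw [Finset.sum_congr rfl this, Finset.sum_const, smul_eq_mul, Finset.card_univ,
      cardV hreg hg hd]
  rw [← hl, hb, Finset.card_sigma]
  rfl

lemma Ind1_card (hreg : G.IsRegularOfDegree 57) (hg : G.girth = 5) (hd : G.diam = 2) :
    (Ind G 1).card = 3250 := by
  have h := stepInd (G := G) 0
  norm_num at h
  rw [Ind0, Finset.sum_singleton, ext0_card hreg hg hd] at h
  omega

lemma Ind2_card (hreg : G.IsRegularOfDegree 57) (hg : G.girth = 5) (hd : G.diam = 2) :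
    (Ind G 2).card = 5187000 := by
  have h := stepInd (G := G) 1
  norm_num at h
  rw [Finset.sum_congr rfl (fun s hs => ext1_card hreg hg hd hs), Finset.sum_const,
    smul_eq_mul, Ind1_card hreg hg hd] at h
  omega

lemma Ind3_card (hreg : G.IsRegularOfDegree 57) (hg : G.girth = 5) (hd : G.diam = 2) :
    (Ind G 3).card = 5420415000 := by
  have h := stepInd (G := G) 2
  norm_num at h
  rw [Finset.sum_congr rfl (fun s hs => ext2_card hreg hg hd hs), Finset.sum_const,
    smul_eq_mul, Ind2_card hreg hg hd] at h
  omega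

lemma Ind4_card (hreg : G.IsRegularOfDegree 57) (hg : G.girth = 5) (hd : G.diam = 2) :
    (Ind G 4).card = 4172340672500 := by
  have h := stepInd (G := G) 3
  norm_num at h
  rw [Finset.sum_congr rfl (fun s hs => ext3_card hreg hg hd hs)] at h
  have h2 : ∑ s ∈ Ind G 3, (3079 - tcount G s) + ∑ s ∈ Ind G 3, tcount G s = 3079 * 5420415000 := by
    rw [← Finset.sum_add_distrib]
    rw [Finset.sum_congr rfl (fun s hs => by
      have := tcount_le_one hg (Or.inr hs); omega : ∀ s ∈ Ind G 3, 3079 - tcount G s + tcount G s = 3079)]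
    rw [Finset.sum_const, smul_eq_mul, Ind3_card hreg hg hd, mul_comm]
  rw [sum_tcount hreg hg hd] at h2
  omega

lemma cyc5_ne (hg : G.girth = 5) {a b c d e : V} (hab : G.Adj a b) (hbc : G.Adj b c)
    (hcd : G.Adj c d) (hde : G.Adj d e) (hea : G.Adj e a) :
    a ≠ b ∧ a ≠ c ∧ a ≠ d ∧ a ≠ e ∧ b ≠ c ∧ b ≠ d ∧ b ≠ e ∧ c ≠ d ∧ c ≠ e ∧ d ≠ e := by
  refine ⟨hab.ne, ?_, ?_, hea.ne', hbc.ne, ?_, ?_, hcd.ne, ?_, hde.ne⟩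
  · rintro rfl; exact noTri hg hcd hde hea.symm
  · rintro rfl; exact noTri hg hab hbc hcd.symm
  · rintro rfl; exact noTri hg hab hde hea.symm
  · rintro rfl; exact noTri hg hbc hcd hde.symm
  · rintro rfl; exact noTri hg hab hbc hea.symm

lemma rot5 (a b c d e : V) : ({b, c, d, e, a} : Finset V) = {a, b, c, d, e} := by
  ext x; simp only [Finset.mem_insert, Finset.mem_singleton]; tauto

lemma cyc5_filter (hg : G.girth = 5) {a b c d e : V} (hab : G.Adj a b) (hbc : G.Adj b c)
    (hcd : G.Adj c d) (hde : G.Adj d e) (hea : G.Adj e a) :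
    ({a, b, c, d, e} : Finset V).filter (fun u => G.Adj a u) = {b, e} := by
  obtain ⟨n1, n2, n3, n4, n5, n6, n7, n8, n9, n10⟩ := cyc5_ne hg hab hbc hcd hde hea
  have nac : ¬ G.Adj a c := noTri hg hab hbc
  have nda : ¬ G.Adj d a := noTri hg hde hea
  ext x
  simp only [Finset.mem_filter, Finset.mem_insert, Finset.mem_singleton]
  constructor
  · rintro ⟨rfl | rfl | rfl | rfl | rfl, h2⟩
    · exact absurd h2 (G.irrefl)
    · exact Or.inl rfl
    · exact absurd h2 nac
    · exact absurd h2 (fun h => nda h.symm)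
    · exact Or.inr rfl
  · rintro (rfl | rfl)
    · exact ⟨Or.inr (Or.inl rfl), hab⟩
    · exact ⟨Or.inr (Or.inr (Or.inr (Or.inr rfl))), hea.symm⟩

lemma cyc5_card (hg : G.girth = 5) {a b c d e : V} (hab : G.Adj a b) (hbc : G.Adj b c)
    (hcd : G.Adj c d) (hde : G.Adj d e) (hea : G.Adj e a) :
    ({a, b, c, d, e} : Finset V).card = 5 := by
  obtain ⟨n1, n2, n3, n4, n5, n6, n7, n8, n9, n10⟩ := cyc5_ne hg hab hbc hcd hde hea
  rw [Finset.card_insert_of_notMem (by simp [n1, n2, n3, n4]),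
    Finset.card_insert_of_notMem (by simp [n5, n6, n7]),
    Finset.card_insert_of_notMem (by simp [n8, n9]),
    Finset.card_insert_of_notMem (by simp [n10]), Finset.card_singleton]

def S5 (G : SimpleGraph V) [DecidableRel G.Adj] : Finset (Finset V) :=
  (((univ : Finset V).powersetCard 5).filter
    fun J => ∀ v ∈ J, (J.filter fun u => G.Adj v u).card = 2)

def T5 (G : SimpleGraph V) [DecidableRel G.Adj] : Finset (V × V × V × V × V) :=
  univ.filter fun t => G.Adj t.1 t.2.1 ∧ G.Adj t.2.1 t.2.2.1 ∧ G.Adj t.2.2.1 t.2.2.2.1 ∧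
    G.Adj t.2.2.2.1 t.2.2.2.2 ∧ G.Adj t.2.2.2.2 t.1 ∧ t.2.2.1 ≠ t.1 ∧ t.2.2.2.2 ≠ t.2.1

def tset (t : V × V × V × V × V) : Finset V := {t.1, t.2.1, t.2.2.1, t.2.2.2.1, t.2.2.2.2}

lemma mem_T5 {a b c d e : V} : (a, b, c, d, e) ∈ T5 G ↔ G.Adj a b ∧ G.Adj b c ∧ G.Adj c d ∧
    G.Adj d e ∧ G.Adj e a ∧ c ≠ a ∧ e ≠ b := by
  simp [T5]

lemma tset_mem_S5 (hg : G.girth = 5) {t : V × V × V × V × V} (ht : t ∈ T5 G) :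
    tset t ∈ S5 G := by
  obtain ⟨a, b, c, d, e⟩ := t
  rw [mem_T5] at ht
  obtain ⟨hab, hbc, hcd, hde, hea, -, -⟩ := ht
  obtain ⟨n1, n2, n3, n4, n5, n6, n7, n8, n9, n10⟩ := cyc5_ne hg hab hbc hcd hde hea
  rw [S5, Finset.mem_filter, Finset.mem_powersetCard_univ]
  refine ⟨cyc5_card hg hab hbc hcd hde hea, ?_⟩
  intro v hv
  rw [tset] at hv ⊢
  dsimp only at hv ⊢
  simp only [Finset.mem_insert, Finset.mem_singleton] at hv
  rcases hv with rfl | rfl | rfl | rfl | rfl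
  · rw [cyc5_filter hg hab hbc hcd hde hea]
    exact Finset.card_pair n7
  · rw [← rot5 a v c d e, cyc5_filter hg hbc hcd hde hea hab]; exact Finset.card_pair (Ne.symm n2)
  · rw [show ({a,b,v,d,e} : Finset V) = {v,d,e,a,b} from by
      ext x; simp only [Finset.mem_insert, Finset.mem_singleton]; tauto,
      cyc5_filter hg hcd hde hea hab hbc]
    exact Finset.card_pair (Ne.symm n6)
  · rw [show ({a,b,c,v,e} : Finset V) = {v,e,a,b,c} from by
      ext x; simp only [Finset.mem_insert, Finset.mem_singleton]; tauto,
      cyc5_filter hg hde hea hab hbc hcd]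
    exact Finset.card_pair (Ne.symm n9)
  · rw [show ({a,b,c,d,v} : Finset V) = {v,a,b,c,d} from by
      ext x; simp only [Finset.mem_insert, Finset.mem_singleton]; tauto,
      cyc5_filter hg hea hab hbc hcd hde]
    exact Finset.card_pair n3

lemma mem_S5 {J : Finset V} : J ∈ S5 G ↔ J.card = 5 ∧
    ∀ v ∈ J, (J.filter fun u => G.Adj v u).card = 2 := by
  simp [S5, Finset.mem_powersetCard_univ]

lemma pair_of_mem {s : Finset V} {x : V} (h2 : s.card = 2) (hx : x ∈ s) :
    ∃ y, y ≠ x ∧ s = {x, y} := by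
  obtain ⟨u, v, huv, rfl⟩ := Finset.card_eq_two.mp h2
  simp only [Finset.mem_insert, Finset.mem_singleton] at hx
  rcases hx with rfl | rfl
  · exact ⟨v, huv.symm, rfl⟩
  · exact ⟨u, huv, Finset.pair_comm u x⟩

lemma S5_struct (hg : G.girth = 5) {J : Finset V} (hJ : J ∈ S5 G) {p q : V}
    (hp : p ∈ J) (hq : q ∈ J) (hpq : G.Adj p q) :
    ∃ r s u, G.Adj q r ∧ G.Adj r s ∧ G.Adj s u ∧ G.Adj u p ∧ J = {p, q, r, s, u} := by
  obtain ⟨hJ5, hdeg⟩ := mem_S5.mp hJ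
  -- the two neighbours of p in J
  obtain ⟨e, heq, hFp⟩ := pair_of_mem (hdeg p hp) (Finset.mem_filter.mpr ⟨hq, hpq⟩)
  have he : e ∈ J ∧ G.Adj p e := by
    have : e ∈ J.filter (fun u => G.Adj p u) := by rw [hFp]; simp
    exact Finset.mem_filter.mp this
  have memFp : ∀ {x}, x ∈ J → G.Adj p x → x = q ∨ x = e := by
    intro x hx hadj
    have : x ∈ J.filter (fun u => G.Adj p u) := Finset.mem_filter.mpr ⟨hx, hadj⟩
    rw [hFp] at this; simpa using this
  -- the two neighbours of q in J
  obtain ⟨r, hrp, hFq⟩ := pair_of_mem (hdeg q hq) (Finset.mem_filter.mpr ⟨hp, hpq.symm⟩)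
  have hr : r ∈ J ∧ G.Adj q r := by
    have : r ∈ J.filter (fun u => G.Adj q u) := by rw [hFq]; simp
    exact Finset.mem_filter.mp this
  have memFq : ∀ {x}, x ∈ J → G.Adj q x → x = p ∨ x = r := by
    intro x hx hadj
    have : x ∈ J.filter (fun u => G.Adj q u) := Finset.mem_filter.mpr ⟨hx, hadj⟩
    rw [hFq] at this; simpa using this
  have hre : r ≠ e := by
    rintro rfl
    exact noTri hg hpq hr.2 he.2
  have hrq : r ≠ q := hr.2.ne'
  -- the two neighbours of r in J
  obtain ⟨s, hsq, hFr⟩ := pair_of_mem (hdeg r hr.1) (Finset.mem_filter.mpr ⟨hq, hr.2.symm⟩)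
  have hs : s ∈ J ∧ G.Adj r s := by
    have : s ∈ J.filter (fun u => G.Adj r u) := by rw [hFr]; simp
    exact Finset.mem_filter.mp this
  have memFr : ∀ {x}, x ∈ J → G.Adj r x → x = q ∨ x = s := by
    intro x hx hadj
    have : x ∈ J.filter (fun u => G.Adj r u) := Finset.mem_filter.mpr ⟨hx, hadj⟩
    rw [hFr] at this; simpa using this
  have hsr : s ≠ r := hs.2.ne'
  have hsp : s ≠ p := by
    rintro rfl
    rcases memFp hr.1 hs.2.symm with h | h
    · exact hrq h
    · exact hre h
  have hpe : p ≠ e := he.2.ne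
  have hpr : p ≠ r := fun h => hrp h.symm
  have hqe : q ≠ e := fun h => heq h.symm
  have hse : s ≠ e := by
    intro hseeq
    subst hseeq
    -- now J ⊇ {p,q,r,s} and the fifth vertex w has no neighbours in J
    have hK : ({p, q, r, s} : Finset V) ⊆ J := by
      intro x hx
      simp only [Finset.mem_insert, Finset.mem_singleton] at hx
      rcases hx with rfl | rfl | rfl | rfl
      exacts [hp, hq, hr.1, hs.1]
    have hKcard : ({p, q, r, s} : Finset V).card = 4 := by
      rw [Finset.card_insert_of_notMem (by simp [hpq.ne, hpr, Ne.symm hsp]),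
        Finset.card_insert_of_notMem (by simp [Ne.symm hrq, Ne.symm hsq]),
        Finset.card_insert_of_notMem (by simp [Ne.symm hsr]), Finset.card_singleton]
    have hdiff : (J \ {p, q, r, s}).card = 1 := by
      rw [Finset.card_sdiff_of_subset hK, hKcard, hJ5]
    obtain ⟨w, hw⟩ := Finset.card_eq_one.mp hdiff
    have hwJ : w ∈ J := by
      have : w ∈ J \ {p,q,r,s} := by rw [hw]; simp
      exact (Finset.mem_sdiff.mp this).1
    have hwK : w ∉ ({p,q,r,s} : Finset V) := by
      have : w ∈ J \ {p,q,r,s} := by rw [hw]; simp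
      exact (Finset.mem_sdiff.mp this).2
    simp only [Finset.mem_insert, Finset.mem_singleton, not_or] at hwK
    obtain ⟨hwp, hwq, hwr, hws⟩ := hwK
    have hJeq : J = insert w ({p,q,r,s} : Finset V) := by
      refine (Finset.eq_of_subset_of_card_le ?_ ?_).symm
      · intro x hx
        rcases Finset.mem_insert.mp hx with rfl | hx
        · exact hwJ
        · exact hK hx
      · rw [hJ5, Finset.card_insert_of_notMem (by simp [hwp, hwq, hwr, hws]), hKcard]
    -- s(=e) has J-neighbours p and r
    have hFs : J.filter (fun u => G.Adj s u) = {p, r} := by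
      apply (Finset.eq_of_subset_of_card_le ?_ ?_).symm
      · intro x hx
        simp only [Finset.mem_insert, Finset.mem_singleton] at hx
        rcases hx with rfl | rfl
        · exact Finset.mem_filter.mpr ⟨hp, he.2.symm⟩
        · exact Finset.mem_filter.mpr ⟨hr.1, hs.2.symm⟩
      · rw [hdeg s hs.1, Finset.card_pair hpr]
    have hFw : J.filter (fun u => G.Adj w u) = ∅ := by
      rw [Finset.eq_empty_iff_forall_notMem]
      intro x hx
      obtain ⟨hxJ, hadj⟩ := Finset.mem_filter.mp hx
      rw [hJeq] at hxJ
      simp only [Finset.mem_insert, Finset.mem_singleton] at hxJ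
      rcases hxJ with rfl | rfl | rfl | rfl | hxs
      · exact G.irrefl hadj
      · rcases memFp hwJ hadj.symm with h | h
        · exact hwq h
        · exact hws h
      · rcases memFq hwJ hadj.symm with h | h
        · exact hwp h
        · exact hwr h
      · rcases memFr hwJ hadj.symm with h | h
        · exact hwq h
        · exact hws h
      · -- x = s
        rw [hxs] at hadj
        have : w ∈ J.filter (fun u => G.Adj s u) := Finset.mem_filter.mpr ⟨hwJ, hadj.symm⟩
        rw [hFs] at this
        simp only [Finset.mem_insert, Finset.mem_singleton] at this
        rcases this with h | h
        · exact hwp h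
        · exact hwr h
    have := hdeg w hwJ
    rw [hFw] at this
    simp at this
  -- now p, q, r, s, e are five distinct vertices, all in J
  have hsub : ({p, q, r, s, e} : Finset V) ⊆ J := by
    intro x hx
    simp only [Finset.mem_insert, Finset.mem_singleton] at hx
    rcases hx with rfl | rfl | rfl | rfl | rfl
    exacts [hp, hq, hr.1, hs.1, he.1]
  have hcard : ({p, q, r, s, e} : Finset V).card = 5 := by
    rw [Finset.card_insert_of_notMem (by simp [hpq.ne, hpr, Ne.symm hsp, hpe]),
      Finset.card_insert_of_notMem (by simp [Ne.symm hrq, Ne.symm hsq, hqe]),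
      Finset.card_insert_of_notMem (by simp [Ne.symm hsr, hre]),
      Finset.card_insert_of_notMem (by simp [hse]), Finset.card_singleton]
  have hJeq : J = {p, q, r, s, e} :=
    (Finset.eq_of_subset_of_card_le hsub (by rw [hJ5, hcard])).symm
  -- finally, s is adjacent to e
  obtain ⟨x, hxr, hFs⟩ := pair_of_mem (hdeg s hs.1) (Finset.mem_filter.mpr ⟨hr.1, hs.2.symm⟩)
  have hx : x ∈ J ∧ G.Adj s x := by
    have : x ∈ J.filter (fun u => G.Adj s u) := by rw [hFs]; simp
    exact Finset.mem_filter.mp this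
  have hxe : x = e := by
    have hxJ := hx.1
    rw [hJeq] at hxJ
    simp only [Finset.mem_insert, Finset.mem_singleton] at hxJ
    rcases hxJ with rfl | rfl | rfl | rfl | hfin
    · rcases memFp hs.1 hx.2.symm with h | h
      · exact absurd h hsq
      · exact absurd h hse
    · rcases memFq hs.1 hx.2.symm with h | h
      · exact absurd h hsp
      · exact absurd h hsr
    · exact absurd rfl hxr
    · exact absurd hx.2 (G.irrefl)
    · exact hfin
  exact ⟨r, s, e, hr.2, hs.2, hxe ▸ hx.2, he.2.symm, hJeq⟩

lemma filter_pair_of_cyc (hg : G.girth = 5) {J : Finset V} (hJ : J ∈ S5 G)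
    {a b c : V} (ha : a ∈ J) (hb : b ∈ J) (hc : c ∈ J) (hab : G.Adj b a) (hbc : G.Adj b c)
    (hac : a ≠ c) : J.filter (fun u => G.Adj b u) = {a, c} := by
  refine (Finset.eq_of_subset_of_card_le ?_ ?_).symm
  · intro x hx
    simp only [Finset.mem_insert, Finset.mem_singleton] at hx
    rcases hx with rfl | rfl
    · exact Finset.mem_filter.mpr ⟨ha, hab⟩
    · exact Finset.mem_filter.mpr ⟨hc, hbc⟩
  · rw [(mem_S5.mp hJ).2 b hb, Finset.card_pair hac]

lemma other_of_pair {a c c' : V} (h : ({a, c} : Finset V) = {a, c'}) (h1 : c' ≠ a) : c' = c := by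
  have : c' ∈ ({a, c'} : Finset V) := by simp
  rw [← h] at this
  simp only [Finset.mem_insert, Finset.mem_singleton] at this
  tauto

lemma fiber10 (hg : G.girth = 5) {J : Finset V} (hJ : J ∈ S5 G) :
    ((T5 G).filter fun t => tset t = J).card = 10 := by
  have hP2 : (J.sigma fun p => J.filter (fun u => G.Adj p u)).card = 10 := by
    rw [Finset.card_sigma,
      Finset.sum_congr rfl (fun p hp => (mem_S5.mp hJ).2 p hp), Finset.sum_const,
      (mem_S5.mp hJ).1]
    simp
  rw [← hP2]
  apply Finset.card_bij (fun t _ => (⟨t.1, t.2.1⟩ : (_ : V) × V))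
  · rintro ⟨a, b, c, d, e⟩ ht
    rw [Finset.mem_filter] at ht
    obtain ⟨ht5, hts⟩ := ht
    refine Finset.mem_sigma.mpr ⟨?_, Finset.mem_filter.mpr ⟨?_, (mem_T5.mp ht5).1⟩⟩
    · rw [← hts, tset]; simp
    · rw [← hts, tset]; simp
  · rintro ⟨a, b, c, d, e⟩ ht ⟨a', b', c', d', e'⟩ ht' heq2
    have hA : a = a' := congrArg Sigma.fst heq2
    have hB : b = b' := congrArg Sigma.snd heq2
    subst hA; subst hB
    rw [Finset.mem_filter] at ht ht'
    obtain ⟨ht5, hts⟩ := ht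
    obtain ⟨ht5', hts'⟩ := ht'
    rw [mem_T5] at ht5 ht5'
    obtain ⟨hab, hbc, hcd, hde, hea, hca, heb⟩ := ht5
    obtain ⟨-, hbc', hcd', hde', hea', hca', heb'⟩ := ht5'
    obtain ⟨n1, n2, n3, n4, n5, n6, n7, n8, n9, n10⟩ := cyc5_ne hg hab hbc hcd hde hea
    obtain ⟨m1, m2, m3, m4, m5, m6, m7, m8, m9, m10⟩ := cyc5_ne hg hab hbc' hcd' hde' hea'
    have hmem : ∀ x ∈ ({a, b, c, d, e} : Finset V), x ∈ J := fun x hx => by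
      rw [← hts, tset]; simpa using (by simpa using hx)
    have hmem' : ∀ x ∈ ({a, b, c', d', e'} : Finset V), x ∈ J := fun x hx => by
      rw [← hts', tset]; simpa using (by simpa using hx)
    have hfb : J.filter (fun u => G.Adj b u) = {a, c} :=
      filter_pair_of_cyc hg hJ (hmem a (by simp)) (hmem b (by simp)) (hmem c (by simp))
        hab.symm hbc n2
    have hfb' : J.filter (fun u => G.Adj b u) = {a, c'} :=
      filter_pair_of_cyc hg hJ (hmem' a (by simp)) (hmem' b (by simp)) (hmem' c' (by simp))
        hab.symm hbc' m2
    have hcc : c = c' := (other_of_pair (hfb.symm.trans hfb') hca').symm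
    subst hcc
    have hfc : J.filter (fun u => G.Adj c u) = {b, d} :=
      filter_pair_of_cyc hg hJ (hmem b (by simp)) (hmem c (by simp)) (hmem d (by simp))
        hbc.symm hcd n6
    have hfc' : J.filter (fun u => G.Adj c u) = {b, d'} :=
      filter_pair_of_cyc hg hJ (hmem' b (by simp)) (hmem' c (by simp)) (hmem' d' (by simp))
        hbc'.symm hcd' m6
    have hdd : d = d' := (other_of_pair (hfc.symm.trans hfc') (Ne.symm m6)).symm
    subst hdd
    have hfd : J.filter (fun u => G.Adj d u) = {c, e} :=
      filter_pair_of_cyc hg hJ (hmem c (by simp)) (hmem d (by simp)) (hmem e (by simp))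
        hcd.symm hde n9
    have hfd' : J.filter (fun u => G.Adj d u) = {c, e'} :=
      filter_pair_of_cyc hg hJ (hmem' c (by simp)) (hmem' d (by simp)) (hmem' e' (by simp))
        hcd'.symm hde' m9
    have hee : e = e' := (other_of_pair (hfd.symm.trans hfd') (Ne.symm m9)).symm
    subst hee
    rfl
  · rintro ⟨p, q⟩ hpq'
    rw [Finset.mem_sigma, Finset.mem_filter] at hpq'
    obtain ⟨hp, hq, hadj⟩ := hpq'
    obtain ⟨r, s, u, h1, h2, h3, h4, hJeq⟩ := S5_struct hg hJ hp hq hadj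
    obtain ⟨n1, n2, n3, n4, n5, n6, n7, n8, n9, n10⟩ := cyc5_ne hg hadj h1 h2 h3 h4
    refine ⟨(p, q, r, s, u), Finset.mem_filter.mpr ⟨mem_T5.mpr
      ⟨hadj, h1, h2, h3, h4, Ne.symm n2, Ne.symm n7⟩, ?_⟩, rfl⟩
    rw [tset, hJeq]

def Q4 (G : SimpleGraph V) [DecidableRel G.Adj] : Finset (V × V × V × V) :=
  univ.filter fun t => G.Adj t.1 t.2.1 ∧ G.Adj t.2.1 t.2.2.1 ∧ t.2.2.1 ≠ t.1 ∧
    G.Adj t.2.2.2 t.1 ∧ t.2.2.2 ≠ t.2.1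

lemma Q4_card (hreg : G.IsRegularOfDegree 57) (hg : G.girth = 5) (hd : G.diam = 2) :
    (Q4 G).card = 580944000 := by
  have hb : (Q4 G).card = ((univ : Finset V).sigma fun a => (G.neighborFinset a).sigma
      fun b => ((G.neighborFinset b).erase a) ×ˢ ((G.neighborFinset a).erase b)).card := by
    apply Finset.card_bij (fun t _ => (⟨t.1, t.2.1, (t.2.2.1, t.2.2.2)⟩ :
      (_ : V) × (_ : V) × V × V))
    · rintro ⟨a, b, c, e⟩ ht
      simp only [Q4, Finset.mem_filter, Finset.mem_univ, true_and] at ht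
      obtain ⟨h1, h2, h3, h4, h5⟩ := ht
      simp only [Finset.mem_sigma, Finset.mem_univ, true_and, Finset.mem_product,
        Finset.mem_erase, mem_neighborFinset]
      exact ⟨h1, ⟨h3, h2⟩, h5, h4.symm⟩
    · rintro ⟨a, b, c, e⟩ ht ⟨a', b', c', e'⟩ ht' h
      have h1 : a = a' := congrArg Sigma.fst h
      subst h1
      have h2 : b = b' := congrArg (fun x => (Sigma.snd x).fst) h
      subst h2
      have h3 : (c, e) = (c', e') := congrArg (fun x => (Sigma.snd x).snd) h
      have h4 : c = c' := congrArg Prod.fst h3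
      have h5 : e = e' := congrArg Prod.snd h3
      subst h4; subst h5; rfl
    · rintro ⟨a, b, ⟨c, e⟩⟩ ht
      simp only [Finset.mem_sigma, Finset.mem_univ, true_and, Finset.mem_product,
        Finset.mem_erase, mem_neighborFinset] at ht
      obtain ⟨h1, ⟨h2, h3⟩, h4, h5⟩ := ht
      exact ⟨(a, b, c, e), by
        simp only [Q4, Finset.mem_filter, Finset.mem_univ, true_and]
        exact ⟨h1, h3, h2, h5.symm, h4⟩, rfl⟩
  rw [hb, Finset.card_sigma]
  have hstep : ∀ a ∈ (univ : Finset V), ((G.neighborFinset a).sigma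
      fun b => ((G.neighborFinset b).erase a) ×ˢ ((G.neighborFinset a).erase b)).card
      = 178752 := by
    intro a _
    rw [Finset.card_sigma]
    have : ∀ b ∈ G.neighborFinset a, (((G.neighborFinset b).erase a) ×ˢ
        ((G.neighborFinset a).erase b)).card = 3136 := by
      intro b hb
      rw [mem_neighborFinset] at hb
      rw [Finset.card_product, Finset.card_erase_of_mem (by rwa [mem_neighborFinset, adj_comm]),
        Finset.card_erase_of_mem (by rwa [mem_neighborFinset]), degN hreg, degN hreg]
    rw [Finset.sum_congr rfl this, Finset.sum_const, degN hreg]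
    simp
  rw [Finset.sum_congr rfl hstep, Finset.sum_const, Finset.card_univ, cardV hreg hg hd]
  simp

lemma T5_card (hreg : G.IsRegularOfDegree 57) (hg : G.girth = 5) (hd : G.diam = 2) :
    (T5 G).card = 580944000 := by
  rw [← Q4_card hreg hg hd]
  have hmap : ∀ t ∈ T5 G, (t.1, t.2.1, t.2.2.1, t.2.2.2.2) ∈ Q4 G := by
    rintro ⟨a, b, c, d, e⟩ ht
    simp only [T5, Finset.mem_filter, Finset.mem_univ, true_and] at ht
    simp only [Q4, Finset.mem_filter, Finset.mem_univ, true_and]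
    exact ⟨ht.1, ht.2.1, ht.2.2.2.2.2.1, ht.2.2.2.2.1, ht.2.2.2.2.2.2⟩
  rw [Finset.card_eq_sum_card_fiberwise hmap]
  have hone : ∀ q ∈ Q4 G,
      ((T5 G).filter fun t => (t.1, t.2.1, t.2.2.1, t.2.2.2.2) = q).card = 1 := by
    rintro ⟨a, b, c, e⟩ hq
    simp only [Q4, Finset.mem_filter, Finset.mem_univ, true_and] at hq
    obtain ⟨hab, hbc, hca, hea, heb⟩ := hq
    have hce : c ≠ e := by
      intro h
      subst h
      exact noTri hg hab hbc hea.symm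
    have hnce : ¬ G.Adj c e := fun h =>
      heb (uniqCommon hg (Ne.symm hca) hab hbc.symm hea.symm h).symm
    obtain ⟨dd, hd1, hd2⟩ := exCommon hd hce hnce
    rw [Finset.card_eq_one]
    refine ⟨(a, b, c, dd, e), ?_⟩
    ext t
    obtain ⟨a', b', c', d', e'⟩ := t
    simp only [Finset.mem_filter, Finset.mem_singleton, Prod.mk.injEq]
    constructor
    · rintro ⟨ht5, h1, h2, h3, h4⟩
      subst h1; subst h2; subst h3; subst h4
      simp only [T5, Finset.mem_filter, Finset.mem_univ, true_and] at ht5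
      have : d' = dd := uniqCommon hg hce ht5.2.2.1 ht5.2.2.2.1.symm hd1 hd2
      exact ⟨rfl, rfl, rfl, this, rfl⟩
    · rintro ⟨rfl, rfl, rfl, rfl, rfl⟩
      refine ⟨?_, rfl, rfl, rfl, rfl⟩
      simp only [T5, Finset.mem_filter, Finset.mem_univ, true_and]
      exact ⟨hab, hbc, hd1, hd2.symm, hea, hca, heb⟩
  rw [Finset.sum_congr rfl hone, Finset.sum_const, smul_eq_mul, mul_one]
end MooreAux

/-- If `G` is a finite 57-regular simple graph with girth 5 and diameter 2, then `G` has
exactly `2⁶·3·5²·7²·13·19` pentagons (5-element vertex subsets inducing a 5-cycle, i.e. whose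
induced subgraph is 2-regular), exactly `2³·3·5⁴·7·11·13·19²` independent sets of size three,
and exactly `2²·5⁴·7·11·13·19·87751` independent sets of size four. -/
theorem stmt_19 {V : Type*} [Fintype V] [DecidableEq V] (G : SimpleGraph V) [DecidableRel G.Adj]
    (hreg : G.IsRegularOfDegree 57) (hgirth : G.girth = 5) (hdiam : G.diam = 2) :
    numInducedReg G 5 2 = 2 ^ 6 * 3 * 5 ^ 2 * 7 ^ 2 * 13 * 19 ∧
      numIndep G 3 = 2 ^ 3 * 3 * 5 ^ 4 * 7 * 11 * 13 * 19 ^ 2 ∧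
      numIndep G 4 = 2 ^ 2 * 5 ^ 4 * 7 * 11 * 13 * 19 * 87751 := by
  refine ⟨?_, ?_, ?_⟩
  · have h1 : numInducedReg G 5 2 = (S5 G).card := rfl
    have h2 : (T5 G).card = ∑ J ∈ S5 G, ((T5 G).filter fun t => tset t = J).card :=
      Finset.card_eq_sum_card_fiberwise fun t ht => tset_mem_S5 hgirth ht
    rw [Finset.sum_congr rfl (fun J hJ => fiber10 hgirth hJ), Finset.sum_const,
      smul_eq_mul, T5_card hreg hgirth hdiam] at h2
    rw [h1]
    omega
  · have h1 : numIndep G 3 = (Ind G 3).card := rfl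
    rw [h1, Ind3_card hreg hgirth hdiam]
    norm_num
  · have h1 : numIndep G 4 = (Ind G 4).card := rfl
    rw [h1, Ind4_card hreg hgirth hdiam]
    norm_num
end
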